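/- arXiv:1806.01845 — 4 statements merged into one kernel-verified Lean document; each statement's English description precedes it below -/
import Mathlib

section
/- For any collection of subsets Y_1, ..., Y_I of R^m and any point y in the convex hull of the Minkowski sum Y_1 + ... + Y_I, there exists a subset S of {1,...,I} of cardinality at most m such that y belongs to the Minkowski sum of Y_i over i not in S plus the Minkowski sum of conv(Y_i) over i in S. -/
open scoped Pointwise

/-!
Write `y = ∑ i, x i` with `x i ∈ conv (Y i)`, and each `x i` as a convex combination of points
`z i j ∈ Y i`. The lifted vectors `(z i j, eᵢ) ∈ E × ℝ^ι` have `(y, 1)` as a nonnegative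
combination, and by the conic Carathéodory theorem this combination can be chosen with linearly
independent support, hence with at most `dim E + |ι|` nonzero weights. Since the weights of each
`i` still sum to `1`, every `i` keeps at least one of them, so at most `dim E` indices keep two or
more; for all other `i` the point `x i` lies in `Y i` itself.
-/

open Finset Module

section ConicCaratheodory

variable {𝕜 E ι : Type*} [Field 𝕜] [LinearOrder 𝕜] [IsStrictOrderedRing 𝕜]
  [AddCommGroup E] [Module 𝕜 E] [Fintype ι]

theorem exists_nonneg_sum_smul_eq_support_ssubset (v : ι → E) {w c : ι → 𝕜} (hw : 0 ≤ w)
    (hc : ∑ i, c i • v i = 0) (hcw : ∀ i, w i = 0 → c i = 0) (hc₀ : c ≠ 0) :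
    ∃ w' : ι → 𝕜, 0 ≤ w' ∧ ∑ i, w' i • v i = ∑ i, w i • v i ∧
      ({i | w' i ≠ 0} : Finset ι) ⊂ ({i | w i ≠ 0} : Finset ι) := by
  wlog hpos : ∃ i, 0 < c i generalizing c
  · push Not at hpos
    refine this (c := -c) (by simp [hc]) (fun i hi => by simp [hcw i hi]) (neg_ne_zero.2 hc₀) ?_
    obtain ⟨i, hi⟩ := Function.ne_iff.1 hc₀
    exact ⟨i, neg_pos.2 ((hpos i).lt_of_ne hi)⟩
  obtain ⟨i₀, hi₀⟩ := hpos
  -- `r` is the largest step along `-c` keeping `w - r • c` nonnegative;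
  -- at `i₁` the weight drops to zero.
  obtain ⟨i₁, hi₁, hmin⟩ := exists_min_image ({i | 0 < c i} : Finset ι) (fun i => w i / c i)
    ⟨i₀, by simpa using hi₀⟩
  have hci₁ : 0 < c i₁ := by simpa using hi₁
  set r := w i₁ / c i₁
  have hr : 0 ≤ r := div_nonneg (hw i₁) hci₁.le
  refine ⟨w - r • c, fun i => ?_, ?_, ?_⟩
  · rcases lt_or_ge 0 (c i) with hci | hci
    · simpa using (le_div_iff₀ hci).1 (hmin i (by simpa using hci))
    · simpa using (mul_nonpos_of_nonneg_of_nonpos hr hci).trans (hw i)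
  · simp [sub_smul, sum_sub_distrib, mul_smul, ← smul_sum, hc]
  · refine (ssubset_iff_of_subset fun i => ?_).2 ⟨i₁, ?_, ?_⟩
    · simp only [mem_filter, mem_univ, true_and]
      exact mt fun hi => by simp [hi, hcw i hi]
    · simpa using fun h => hci₁.ne' (hcw i₁ h)
    · simp [r, div_mul_cancel₀ _ hci₁.ne']

theorem exists_nonneg_sum_smul_eq_linearIndepOn (v : ι → E) {w : ι → 𝕜} (hw : 0 ≤ w) :
    ∃ w' : ι → 𝕜, 0 ≤ w' ∧ ∑ i, w' i • v i = ∑ i, w i • v i ∧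
      LinearIndepOn 𝕜 v ({i | w' i ≠ 0} : Finset ι) := by
  induction h : #{i | w i ≠ 0} using Nat.strong_induction_on generalizing w with
  | _ n ih =>
  by_cases hli : LinearIndepOn 𝕜 v ({i | w i ≠ 0} : Finset ι)
  · exact ⟨w, hw, rfl, hli⟩
  obtain ⟨f, hf, i₀, hi₀, hfi₀⟩ := not_linearIndepOn_finset_iff.1 hli
  obtain ⟨w₁, hw₁, hsum₁, hsupp₁⟩ := exists_nonneg_sum_smul_eq_support_ssubset v hw
    (c := fun i => if w i ≠ 0 then f i else 0) (by simpa [ite_smul, sum_filter] using hf)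
    (fun i hi => by simp [hi]) (Function.ne_iff.2 ⟨i₀, by simpa [(mem_filter.1 hi₀).2] using hfi₀⟩)
  obtain ⟨w', hw', hsum', hli'⟩ := ih _ (h ▸ card_lt_card hsupp₁) hw₁ rfl
  exact ⟨w', hw', hsum'.trans hsum₁, hli'⟩

end ConicCaratheodory

theorem card_filter_one_lt_le {ι : Type*} [Fintype ι] {f : ι → ℕ} (hf : ∀ i, 1 ≤ f i) {m : ℕ}
    (h : ∑ i, f i ≤ m + Fintype.card ι) : #{i | 1 < f i} ≤ m := by
  have : ∑ i, ((if 1 < f i then 1 else 0) + 1) ≤ ∑ i, f i :=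
    sum_le_sum fun i _ => by have := hf i; split_ifs <;> omega
  rw [sum_add_distrib, ← card_filter, sum_const, card_univ, smul_eq_mul, mul_one] at this
  omega

section ConvexCombination

variable {𝕜 E : Type*} [Semiring 𝕜] [AddCommMonoid E] [Module 𝕜 E]

theorem sum_smul_mem_of_card_support_le_one [Nontrivial 𝕜] [DecidableEq 𝕜] {κ : Type*}
    [Fintype κ] {s : Set E} {w : κ → 𝕜} {z : κ → E} (hw : ∑ j, w j = 1) (hsupp : #{j | w j ≠ 0} ≤ 1)
    (hz : ∀ j, z j ∈ s) : ∑ j, w j • z j ∈ s := by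
  obtain ⟨j₀, -, hj₀⟩ := exists_ne_zero_of_sum_ne_zero (hw.trans_ne one_ne_zero)
  have hzero : ∀ j ≠ j₀, w j = 0 := fun j hj => by
    by_contra h
    exact hj (card_le_one.1 hsupp j (by simpa using h) j₀ (by simpa using hj₀))
  have hone : w j₀ = 1 := by
    rwa [sum_eq_single j₀ (fun j _ hj => hzero j hj) (by simp)] at hw
  rw [sum_eq_single j₀ (fun j _ hj => by simp [hzero j hj]) (by simp), hone, one_smul]
  exact hz j₀

theorem sum_sigma_smul_mk_single {ι : Type*} [Fintype ι] [DecidableEq ι] {κ : ι → Type*}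
    [∀ i, Fintype (κ i)] (z : (i : ι) → κ i → E) (u : (Σ i, κ i) → 𝕜) :
    ∑ p, u p • (z p.1 p.2, Pi.single p.1 (1 : 𝕜)) =
      (∑ i, ∑ j, u ⟨i, j⟩ • z i j, fun i => ∑ j, u ⟨i, j⟩) := by
  ext i
  · simp [Fintype.sum_sigma, Prod.fst_sum]
  · simp [Fintype.sum_sigma, Prod.snd_sum, Finset.sum_apply, Pi.single_apply]

end ConvexCombination

section ShapleyFolkman

variable {𝕜 E ι : Type*} [Field 𝕜] [LinearOrder 𝕜] [IsStrictOrderedRing 𝕜]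
  [AddCommGroup E] [Module 𝕜 E] [FiniteDimensional 𝕜 E] [Fintype ι]

theorem exists_sparse_convex_combinations {Y : ι → Set E} {x : ι → E}
    (hx : ∀ i, x i ∈ convexHull 𝕜 (Y i)) :
    ∃ (κ : ι → Type) (_ : ∀ i, Fintype (κ i)) (w : (i : ι) → κ i → 𝕜) (z : (i : ι) → κ i → E),
      (∀ i j, 0 ≤ w i j) ∧ (∀ i, ∑ j, w i j = 1) ∧ (∀ i j, z i j ∈ Y i) ∧
      ∑ i, ∑ j, w i j • z i j = ∑ i, x i ∧
      ∑ i, #{j | w i j ≠ 0} ≤ finrank 𝕜 E + Fintype.card ι := by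
  classical
  choose κ _ w z hw₀ hw₁ hz hwz using fun i => mem_convexHull_iff_exists_fintype.1 (hx i)
  obtain ⟨W, hW₀, hWsum, hli⟩ := exists_nonneg_sum_smul_eq_linearIndepOn
    (fun p : Σ i, κ i => (z p.1 p.2, (Pi.single p.1 (1 : 𝕜) : ι → 𝕜))) (w := fun p => w p.1 p.2)
    fun p => hw₀ p.1 p.2
  simp only [sum_sigma_smul_mk_single, Prod.mk.injEq, funext_iff] at hWsum
  refine ⟨κ, inferInstance, fun i j => W ⟨i, j⟩, z, fun i j => hW₀ _, fun i => ?_, hz, ?_, ?_⟩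
  · simpa [hw₁] using hWsum.2 i
  · simpa [hwz] using hWsum.1
  · have := hli.fintype_card_le_finrank
    simp only [finrank_prod, finrank_fintype_fun_eq_card] at this
    convert this using 1
    simp [card_filter, Fintype.sum_sigma]

theorem exists_card_le_finrank_mem_sum_add_sum_convexHull [DecidableEq ι] {Y : ι → Set E} {y : E}
    (hy : y ∈ convexHull 𝕜 (∑ i, Y i)) :
    ∃ S : Finset ι, #S ≤ finrank 𝕜 E ∧ y ∈ (∑ i ∈ Sᶜ, Y i) + ∑ i ∈ S, convexHull 𝕜 (Y i) := by
  rw [convexHull_sum, Set.mem_fintype_sum] at hy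
  obtain ⟨x, hx, rfl⟩ := hy
  obtain ⟨κ, _, w, z, hw₀, hw₁, hz, hwz, hcard⟩ := exists_sparse_convex_combinations hx
  refine ⟨({i | 1 < #{j | w i j ≠ 0}} : Finset ι), card_filter_one_lt_le (fun i => ?_) hcard, ?_⟩
  · obtain ⟨j, -, hj⟩ := exists_ne_zero_of_sum_ne_zero ((hw₁ i).trans_ne one_ne_zero)
    exact card_pos.2 ⟨j, by simpa using hj⟩
  rw [← hwz, ← sum_compl_add_sum]
  refine Set.add_mem_add (Set.finsetSum_mem_finsetSum _ _ _ fun i hi => ?_)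
    (Set.finsetSum_mem_finsetSum _ _ _ fun i _ =>
      mem_convexHull_of_exists_fintype _ _ (hw₀ i) (hw₁ i) (hz i) rfl)
  exact sum_smul_mem_of_card_support_le_one (hw₁ i) (by simpa using hi) (hz i)

end ShapleyFolkman

/-- **Shapley–Folkman lemma.** For any collection of subsets `Y 1, ..., Y I` of `ℝ^m` and any
point `y` in the convex hull of the Minkowski sum `Y 1 + ⋯ + Y I`, there is a subset
`S ⊆ {1, ..., I}` of cardinality at most `m` such that `y` belongs to the Minkowski sum of the
`Y i` over `i ∉ S` plus the Minkowski sum of the convex hulls `conv (Y i)` over `i ∈ S`. -/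
theorem shapley_folkman (m I : ℕ) (Y : Fin I → Set (Fin m → ℝ))
    (y : Fin m → ℝ) (hy : y ∈ convexHull ℝ (∑ i : Fin I, Y i)) :
    ∃ S : Finset (Fin I), S.card ≤ m ∧
      y ∈ (∑ i ∈ Sᶜ, Y i) + ∑ i ∈ S, convexHull ℝ (Y i) := by
  simpa using exists_card_le_finrank_mem_sum_add_sum_convexHull hy
end

section
/- Subdifferential of the nuclear norm: for a matrix Z with skinny SVD U Σ V^T, the subdifferential ∂‖Z‖_* equals {U V^T + T : U^T T = 0, T V = 0, ‖T‖ ≤ 1}. -/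
open scoped BigOperators
open Matrix

/-- The singular values of a real matrix: square roots of the eigenvalues of `Aᴴ * A`. -/
noncomputable def singularValues {m n : ℕ} (A : Matrix (Fin m) (Fin n) ℝ) : Fin n → ℝ :=
  fun j => Real.sqrt ((show (Aᵀ * A).IsHermitian by
    simpa [Matrix.conjTranspose_eq_transpose_of_trivial] using
      Matrix.isHermitian_conjTranspose_mul_self A).eigenvalues j)

/-- The nuclear norm `‖A‖_* = Σ_i σ_i(A)`. -/
noncomputable def nuclearNorm {m n : ℕ} (A : Matrix (Fin m) (Fin n) ℝ) : ℝ :=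
  ∑ j, singularValues A j

/-- The operator (spectral) norm `‖A‖ = σ_max(A)`. -/
noncomputable def opNorm {m n : ℕ} (A : Matrix (Fin m) (Fin n) ℝ) : ℝ :=
  ⨆ j, singularValues A j

/-!
The nuclear norm is dual to the operator norm: `tr (Gᵀ W) ≤ ‖W‖_*` for every `W` iff `‖G‖ ≤ 1`
(evaluate the trace in an orthonormal eigenbasis of `Wᵀ W` for one direction, test rank-one `W`
for the other). As `‖·‖_*` vanishes at `0` and is positively homogeneous, `G` is a subgradient at
`Z` iff `‖G‖ ≤ 1` and `tr (Gᵀ Z) = ‖Z‖_* = ∑ σᵢ`. Since `tr (Gᵀ Z) = ∑ σᵢ uᵢᵀ G vᵢ` with every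
`uᵢᵀ G vᵢ ≤ 1` and every `σᵢ > 0`, equality forces `G vᵢ = uᵢ` and `Gᵀ uᵢ = vᵢ`, i.e.
`G = U Vᵀ + T` with `Uᵀ T = 0` and `T V = 0`; then `Tᵀ T = Gᵀ G - V Vᵀ` gives `‖T‖ ≤ 1`.
Conversely `(U Vᵀ + T)ᵀ (U Vᵀ + T) = V Vᵀ + Tᵀ T` and `T` vanishes on the range of `V`, so
`‖U Vᵀ + T‖ ≤ 1`. Nuclear norms are computed with `Matrix.charpoly_mul_comm'`: `P Q` and `Q P`
have the same nonzero eigenvalues.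
-/

namespace Polynomial

lemma roots_X_pow_mul_prod_X_sub_C {R ι : Type*} [CommRing R] [IsDomain R] [Fintype ι] (k : ℕ)
    (e : ι → R) :
    (X ^ k * ∏ i, (X - C (e i))).roots = Multiset.replicate k 0 + Finset.univ.val.map e := by
  have hprod : ∏ i, (X - C (e i)) ≠ 0 := Finset.prod_ne_zero_iff.mpr fun i _ => X_sub_C_ne_zero _
  rw [roots_mul (mul_ne_zero (pow_ne_zero _ X_ne_zero) hprod), roots_X_pow, roots_prod _ _ hprod]
  simp [Multiset.nsmul_singleton]

end Polynomial

namespace Matrix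

lemma isHermitian_transpose_mul_self {m n : Type*} [Fintype m] (A : Matrix m n ℝ) :
    (Aᵀ * A).IsHermitian := by
  simpa only [conjTranspose_eq_transpose_of_trivial] using isHermitian_conjTranspose_mul_self A

lemma col_dotProduct_col_self_eq_one {m n : Type*} [Fintype m] [DecidableEq n]
    {A : Matrix m n ℝ} (hA : Aᵀ * A = 1) (i : n) : A.col i ⬝ᵥ A.col i = 1 :=
  (congrFun₂ hA i i).trans (one_apply_eq i)

section Real

variable {m n r : Type*} [Fintype m] [Fintype n] [Fintype r]

lemma dotProduct_self_nonneg (x : n → ℝ) : 0 ≤ x ⬝ᵥ x :=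
  Finset.sum_nonneg fun i _ => mul_self_nonneg (x i)

lemma dotProduct_le_sqrt_mul_sqrt (x y : n → ℝ) : x ⬝ᵥ y ≤ √(x ⬝ᵥ x) * √(y ⬝ᵥ y) := by
  simpa only [dotProduct, sq] using Real.sum_mul_le_sqrt_mul_sqrt Finset.univ x y

lemma sub_dotProduct_sub_self (x y : n → ℝ) :
    (x - y) ⬝ᵥ (x - y) = x ⬝ᵥ x - 2 * (x ⬝ᵥ y) + y ⬝ᵥ y := by
  rw [sub_dotProduct, dotProduct_sub, dotProduct_sub, dotProduct_comm y x]
  ring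

lemma transpose_mulVec_dotProduct (A : Matrix m n ℝ) (x : m → ℝ) (y : n → ℝ) :
    (Aᵀ *ᵥ x) ⬝ᵥ y = x ⬝ᵥ (A *ᵥ y) := by
  rw [mulVec_transpose, dotProduct_mulVec]

lemma mulVec_dotProduct_mulVec_self (A : Matrix m n ℝ) (y : n → ℝ) :
    (A *ᵥ y) ⬝ᵥ (A *ᵥ y) = y ⬝ᵥ ((Aᵀ * A) *ᵥ y) := by
  rw [← mulVec_mulVec, ← transpose_mulVec_dotProduct, dotProduct_comm]

lemma sub_mulVec_dotProduct_sub_mulVec [DecidableEq r] {V : Matrix n r ℝ} (hV : Vᵀ * V = 1)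
    (y : n → ℝ) :
    (y - V *ᵥ (Vᵀ *ᵥ y)) ⬝ᵥ (y - V *ᵥ (Vᵀ *ᵥ y)) = y ⬝ᵥ y - (Vᵀ *ᵥ y) ⬝ᵥ (Vᵀ *ᵥ y) := by
  rw [sub_dotProduct_sub_self, mulVec_dotProduct_mulVec_self, hV, one_mulVec,
    ← transpose_mulVec_dotProduct, dotProduct_comm]
  ring

lemma trace_eq_sum_col_dotProduct [DecidableEq n] (M : Matrix n n ℝ) {u : Matrix n n ℝ}
    (hu : u * uᵀ = 1) : M.trace = ∑ j, u.col j ⬝ᵥ (M *ᵥ u.col j) :=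
  calc M.trace = (uᵀ * (M * u)).trace := by
        rw [trace_mul_comm, Matrix.mul_assoc, hu, Matrix.mul_one]
    _ = _ := rfl

lemma dotProduct_mulVec_mul_diagonal_mul_transpose [DecidableEq n] (u : Matrix n n ℝ) (d : n → ℝ)
    (x : n → ℝ) :
    x ⬝ᵥ ((u * diagonal d * uᵀ) *ᵥ x) = ∑ j, d j * ((uᵀ *ᵥ x) j * (uᵀ *ᵥ x) j) := by
  rw [← mulVec_mulVec, ← mulVec_mulVec, ← transpose_mulVec_dotProduct]
  simp only [dotProduct, mulVec_diagonal]
  exact Finset.sum_congr rfl fun j _ => by ring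

lemma trace_transpose_mul_vecMulVec (G : Matrix m n ℝ) (x : m → ℝ) (y : n → ℝ) :
    (Gᵀ * vecMulVec x y).trace = x ⬝ᵥ (G *ᵥ y) := by
  simp only [trace, diag, mul_apply, vecMulVec_apply, transpose_apply, mulVec, dotProduct,
    Finset.mul_sum]
  rw [Finset.sum_comm]
  exact Finset.sum_congr rfl fun i _ => Finset.sum_congr rfl fun j _ => by ring

end Real

namespace IsHermitian

variable {n : Type*} [Fintype n] [DecidableEq n] {A : Matrix n n ℝ}

lemma eigenvectorUnitary_mul_transpose_self (hA : A.IsHermitian) :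
    (hA.eigenvectorUnitary : Matrix n n ℝ) * (hA.eigenvectorUnitary : Matrix n n ℝ)ᵀ = 1 := by
  simpa only [star_eq_conjTranspose, conjTranspose_eq_transpose_of_trivial] using
    mem_unitaryGroup_iff.mp hA.eigenvectorUnitary.2

lemma col_eigenvectorUnitary_dotProduct_self (hA : A.IsHermitian) (j : n) :
    (hA.eigenvectorUnitary : Matrix n n ℝ).col j ⬝ᵥ (hA.eigenvectorUnitary : Matrix n n ℝ).col j
      = 1 := by
  refine col_dotProduct_col_self_eq_one ?_ j
  simpa only [star_eq_conjTranspose, conjTranspose_eq_transpose_of_trivial] using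
    mem_unitaryGroup_iff'.mp hA.eigenvectorUnitary.2

lemma eigenvalues_eq_col_dotProduct (hA : A.IsHermitian) (j : n) :
    hA.eigenvalues j = (hA.eigenvectorUnitary : Matrix n n ℝ).col j ⬝ᵥ
      (A *ᵥ (hA.eigenvectorUnitary : Matrix n n ℝ).col j) := by
  simpa [dotProduct_comm] using hA.eigenvalues_eq j

lemma forall_eigenvalues_le_iff (hA : A.IsHermitian) (c : ℝ) :
    (∀ j, hA.eigenvalues j ≤ c) ↔ ∀ x, x ⬝ᵥ (A *ᵥ x) ≤ c * (x ⬝ᵥ x) := by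
  refine ⟨fun h x => ?_, fun h j => ?_⟩
  · have hspec : A = hA.eigenvectorUnitary * diagonal hA.eigenvalues *
        (hA.eigenvectorUnitary : Matrix n n ℝ)ᵀ := by
      simpa only [RCLike.ofReal_real_eq_id, Function.id_comp, Unitary.conjStarAlgAut_apply,
        star_eq_conjTranspose, conjTranspose_eq_transpose_of_trivial] using hA.spectral_theorem
    have hnorm : x ⬝ᵥ x =
        ∑ j, (hA.eigenvectorUnitary.1ᵀ *ᵥ x) j * (hA.eigenvectorUnitary.1ᵀ *ᵥ x) j := by
      rw [← dotProduct, transpose_mulVec_dotProduct, mulVec_mulVec,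
        hA.eigenvectorUnitary_mul_transpose_self, one_mulVec]
    conv_lhs => rw [hspec]
    rw [dotProduct_mulVec_mul_diagonal_mul_transpose, hnorm, Finset.mul_sum]
    gcongr with j
    exacts [mul_self_nonneg _, h j]
  · have := h (hA.eigenvectorUnitary.1.col j)
    rwa [hA.col_eigenvectorUnitary_dotProduct_self, mul_one,
      ← hA.eigenvalues_eq_col_dotProduct] at this

lemma sum_apply_eigenvalues_of_eq_mul {r : Type*} [Fintype r] [DecidableEq r]
    (hA : A.IsHermitian) {P : Matrix n r ℝ} {Q : Matrix r n ℝ} (hPQ : A = P * Q) {d : r → ℝ}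
    (hQP : Q * P = diagonal d) {f : ℝ → ℝ} (hf : f 0 = 0) :
    ∑ j, f (hA.eigenvalues j) = ∑ i, f (d i) := by
  have h := congrArg (fun p => (p.roots.map f).sum) (charpoly_mul_comm' P Q)
  simp only [← hPQ, hQP, hA.charpoly_eq, charpoly_diagonal] at h
  simpa [Polynomial.roots_X_pow_mul_prod_X_sub_C, hf] using h

end IsHermitian

end Matrix

section NuclearNorm

variable {m n : ℕ}

lemma nuclearNorm_eq_sum_sqrt_of_transpose_mul_self_eq {r : Type*} [Fintype r] [DecidableEq r]
    {A : Matrix (Fin m) (Fin n) ℝ} {P : Matrix (Fin n) r ℝ} {Q : Matrix r (Fin n) ℝ}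
    (hPQ : Aᵀ * A = P * Q) {d : r → ℝ} (hQP : Q * P = diagonal d) :
    nuclearNorm A = ∑ i, √(d i) :=
  (isHermitian_transpose_mul_self A).sum_apply_eigenvalues_of_eq_mul hPQ hQP Real.sqrt_zero

lemma nuclearNorm_mul_diagonal_mul_transpose {r : ℕ} {U : Matrix (Fin m) (Fin r) ℝ}
    {V : Matrix (Fin n) (Fin r) ℝ} (hU : Uᵀ * U = 1) (hV : Vᵀ * V = 1) {d : Fin r → ℝ}
    (hd : ∀ i, 0 ≤ d i) : nuclearNorm (U * diagonal d * Vᵀ) = ∑ i, d i := by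
  have hPQ : (U * diagonal d * Vᵀ)ᵀ * (U * diagonal d * Vᵀ) = V * (diagonal (d * d) * Vᵀ) := by
    simp only [transpose_mul, transpose_transpose, diagonal_transpose, Matrix.mul_assoc]
    rw [← Matrix.mul_assoc Uᵀ, hU, Matrix.one_mul, ← Matrix.mul_assoc (diagonal d),
      diagonal_mul_diagonal]
    rfl
  have hQP : diagonal (d * d) * Vᵀ * V = diagonal (d * d) := by
    rw [Matrix.mul_assoc, hV, Matrix.mul_one]
  rw [nuclearNorm_eq_sum_sqrt_of_transpose_mul_self_eq hPQ hQP]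
  exact Finset.sum_congr rfl fun i _ => Real.sqrt_mul_self (hd i)

lemma nuclearNorm_vecMulVec (x : Fin m → ℝ) (y : Fin n → ℝ) :
    nuclearNorm (vecMulVec x y) = √(x ⬝ᵥ x) * √(y ⬝ᵥ y) := by
  have hPQ : (vecMulVec x y)ᵀ * vecMulVec x y =
      replicateCol Unit y * replicateRow Unit ((x ⬝ᵥ x) • y) := by
    ext i j
    simp only [mul_apply, transpose_apply, vecMulVec_apply, replicateCol_apply,
      replicateRow_apply, Pi.smul_apply, smul_eq_mul, dotProduct, Fintype.sum_unique,
      Finset.sum_mul, Finset.mul_sum]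
    exact Finset.sum_congr rfl fun k _ => by ring
  have hQP : replicateRow Unit ((x ⬝ᵥ x) • y) * replicateCol Unit y =
      diagonal fun _ => (x ⬝ᵥ x) * (y ⬝ᵥ y) := by
    ext i j
    simp only [mul_apply, replicateRow_apply, replicateCol_apply, Pi.smul_apply, smul_eq_mul,
      diagonal_apply_eq, dotProduct, Finset.mul_sum]
    exact Finset.sum_congr rfl fun k _ => by ring
  rw [nuclearNorm_eq_sum_sqrt_of_transpose_mul_self_eq hPQ hQP, Fintype.sum_unique,
    Real.sqrt_mul (dotProduct_self_nonneg x)]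

lemma nuclearNorm_zero : nuclearNorm (0 : Matrix (Fin m) (Fin n) ℝ) = 0 := by
  simpa using nuclearNorm_vecMulVec (0 : Fin m → ℝ) (0 : Fin n → ℝ)

end NuclearNorm

section OpNorm

variable {m n : ℕ}

lemma opNorm_le_one_iff (A : Matrix (Fin m) (Fin n) ℝ) :
    opNorm A ≤ 1 ↔ ∀ y, (A *ᵥ y) ⬝ᵥ (A *ᵥ y) ≤ y ⬝ᵥ y := by
  have hsv : opNorm A ≤ 1 ↔ ∀ j, singularValues A j ≤ 1 :=
    ⟨fun h j => (le_ciSup (Set.finite_range _).bddAbove j).trans h,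
      fun h => Real.iSup_le h zero_le_one⟩
  simp only [hsv, singularValues, Real.sqrt_le_one, mulVec_dotProduct_mulVec_self]
  simpa only [one_mul] using (isHermitian_transpose_mul_self A).forall_eigenvalues_le_iff 1

lemma opNorm_le_one_iff_dotProduct_mulVec_le (A : Matrix (Fin m) (Fin n) ℝ) :
    opNorm A ≤ 1 ↔ ∀ x y, x ⬝ᵥ (A *ᵥ y) ≤ √(x ⬝ᵥ x) * √(y ⬝ᵥ y) := by
  rw [opNorm_le_one_iff]
  refine ⟨fun h x y => (dotProduct_le_sqrt_mul_sqrt x _).trans ?_, fun h y => ?_⟩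
  · gcongr
    exact h y
  · have hle := h (A *ᵥ y) y
    rw [← Real.sqrt_le_sqrt_iff (dotProduct_self_nonneg y)]
    have := Real.mul_self_sqrt (dotProduct_self_nonneg (A *ᵥ y))
    nlinarith [Real.sqrt_nonneg ((A *ᵥ y) ⬝ᵥ (A *ᵥ y)), Real.sqrt_nonneg (y ⬝ᵥ y)]

lemma opNorm_transpose_le_one {A : Matrix (Fin m) (Fin n) ℝ} (hA : opNorm A ≤ 1) :
    opNorm Aᵀ ≤ 1 := by
  rw [opNorm_le_one_iff_dotProduct_mulVec_le] at hA ⊢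
  intro x y
  rw [← transpose_mulVec_dotProduct, transpose_transpose, dotProduct_comm, mul_comm]
  exact hA y x

lemma trace_transpose_mul_le_nuclearNorm {G : Matrix (Fin m) (Fin n) ℝ} (hG : opNorm G ≤ 1)
    (W : Matrix (Fin m) (Fin n) ℝ) : (Gᵀ * W).trace ≤ nuclearNorm W := by
  have hW := isHermitian_transpose_mul_self W
  rw [trace_eq_sum_col_dotProduct _ hW.eigenvectorUnitary_mul_transpose_self]
  refine Finset.sum_le_sum fun j _ => ?_
  set q := (hW.eigenvectorUnitary : Matrix (Fin n) (Fin n) ℝ).col j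
  have hq : q ⬝ᵥ q = 1 := hW.col_eigenvectorUnitary_dotProduct_self j
  calc q ⬝ᵥ ((Gᵀ * W) *ᵥ q) = (W *ᵥ q) ⬝ᵥ (G *ᵥ q) := by
        rw [← mulVec_mulVec, ← transpose_mulVec_dotProduct, transpose_transpose, dotProduct_comm]
    _ ≤ √((W *ᵥ q) ⬝ᵥ (W *ᵥ q)) * √(q ⬝ᵥ q) := (opNorm_le_one_iff_dotProduct_mulVec_le G).1 hG _ _
    _ = singularValues W j := by
        rw [hq, Real.sqrt_one, mul_one, mulVec_dotProduct_mulVec_self,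
          ← hW.eigenvalues_eq_col_dotProduct]
        rfl

lemma opNorm_le_one_iff_forall_trace_le (G : Matrix (Fin m) (Fin n) ℝ) :
    opNorm G ≤ 1 ↔ ∀ W, (Gᵀ * W).trace ≤ nuclearNorm W := by
  refine ⟨trace_transpose_mul_le_nuclearNorm, fun h => ?_⟩
  rw [opNorm_le_one_iff_dotProduct_mulVec_le]
  intro x y
  rw [← trace_transpose_mul_vecMulVec, ← nuclearNorm_vecMulVec]
  exact h (vecMulVec x y)

end OpNorm

lemma forall_add_trace_le_iff {m n : Type*} [Fintype m] [Fintype n]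
    {f : Matrix m n ℝ → ℝ} {Z : Matrix m n ℝ} (h0 : f 0 = 0) (h2 : f (Z + Z) = 2 * f Z)
    (G : Matrix m n ℝ) :
    (∀ W, f Z + (Gᵀ * (W - Z)).trace ≤ f W) ↔
      (∀ W, (Gᵀ * W).trace ≤ f W) ∧ (Gᵀ * Z).trace = f Z := by
  simp only [Matrix.mul_sub, trace_sub]
  refine ⟨fun h => ?_, fun ⟨h, hZ⟩ W => by linarith [h W]⟩
  have hZ : (Gᵀ * Z).trace = f Z := by
    have h₀ := h 0
    have h₂ := h (Z + Z)
    rw [Matrix.mul_zero, trace_zero, h0] at h₀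
    rw [Matrix.mul_add, trace_add, h2] at h₂
    linarith
  exact ⟨fun W => by linarith [h W], hZ⟩

section SingularValueDecomposition

variable {m n r : ℕ} {U : Matrix (Fin m) (Fin r) ℝ} {V : Matrix (Fin n) (Fin r) ℝ}

lemma trace_transpose_mul_mul_diagonal_mul_transpose (G : Matrix (Fin m) (Fin n) ℝ)
    (σ : Fin r → ℝ) :
    (Gᵀ * (U * diagonal σ * Vᵀ)).trace = ∑ i, σ i * (U.col i ⬝ᵥ (G *ᵥ V.col i)) := by
  rw [← Matrix.mul_assoc, ← Matrix.mul_assoc, trace_mul_comm, ← Matrix.mul_assoc, trace]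
  refine Finset.sum_congr rfl fun i _ => ?_
  rw [diag_apply, mul_diagonal, mul_comm]
  congr 1
  calc (Vᵀ * (Gᵀ * U)) i i = (Gᵀ *ᵥ U.col i) ⬝ᵥ V.col i := dotProduct_comm _ _
    _ = _ := transpose_mulVec_dotProduct G _ _

lemma trace_transpose_mul_mul_diagonal_mul_transpose_of_mul_eq (hU : Uᵀ * U = 1)
    {G : Matrix (Fin m) (Fin n) ℝ} (hGV : G * V = U) (σ : Fin r → ℝ) :
    (Gᵀ * (U * diagonal σ * Vᵀ)).trace = ∑ i, σ i := by
  rw [trace_transpose_mul_mul_diagonal_mul_transpose]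
  refine Finset.sum_congr rfl fun i _ => ?_
  rw [show G *ᵥ V.col i = U.col i from congrArg (·.col i) hGV,
    col_dotProduct_col_self_eq_one hU, mul_one]

lemma dotProduct_mulVec_le_one {G : Matrix (Fin m) (Fin n) ℝ} (hG : opNorm G ≤ 1) {u : Fin m → ℝ}
    {v : Fin n → ℝ} (hu : u ⬝ᵥ u ≤ 1) (hv : v ⬝ᵥ v ≤ 1) : u ⬝ᵥ (G *ᵥ v) ≤ 1 := by
  have h := sub_dotProduct_sub_self (G *ᵥ v) u
  linarith [(opNorm_le_one_iff G).1 hG v, dotProduct_self_nonneg (G *ᵥ v - u),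
    dotProduct_comm (G *ᵥ v) u]

lemma mulVec_eq_of_dotProduct_mulVec_eq_one {G : Matrix (Fin m) (Fin n) ℝ} (hG : opNorm G ≤ 1)
    {u : Fin m → ℝ} {v : Fin n → ℝ} (hu : u ⬝ᵥ u ≤ 1) (hv : v ⬝ᵥ v ≤ 1)
    (h : u ⬝ᵥ (G *ᵥ v) = 1) : G *ᵥ v = u := by
  have hle : (G *ᵥ v - u) ⬝ᵥ (G *ᵥ v - u) ≤ 0 := by
    rw [sub_dotProduct_sub_self, dotProduct_comm (G *ᵥ v) u, h]
    linarith [(opNorm_le_one_iff G).1 hG v]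
  exact sub_eq_zero.mp (dotProduct_self_eq_zero.mp (hle.antisymm (dotProduct_self_nonneg _)))

lemma mul_eq_and_transpose_mul_eq_of_trace_eq (hU : Uᵀ * U = 1) (hV : Vᵀ * V = 1)
    {σ : Fin r → ℝ} (hσ : ∀ i, 0 < σ i) {G : Matrix (Fin m) (Fin n) ℝ} (hG : opNorm G ≤ 1)
    (h : (Gᵀ * (U * diagonal σ * Vᵀ)).trace = ∑ i, σ i) : G * V = U ∧ Uᵀ * G = Vᵀ := by
  have hu i : U.col i ⬝ᵥ U.col i ≤ 1 := (col_dotProduct_col_self_eq_one hU i).le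
  have hv i : V.col i ⬝ᵥ V.col i ≤ 1 := (col_dotProduct_col_self_eq_one hV i).le
  have hle i : σ i * (U.col i ⬝ᵥ (G *ᵥ V.col i)) ≤ σ i :=
    mul_le_of_le_one_right (hσ i).le (dotProduct_mulVec_le_one hG (hu i) (hv i))
  have heq i : U.col i ⬝ᵥ (G *ᵥ V.col i) = 1 := by
    rw [trace_transpose_mul_mul_diagonal_mul_transpose] at h
    exact (mul_eq_left₀ (hσ i).ne').1
      ((Finset.sum_eq_sum_iff_of_le fun i _ => hle i).1 h i (Finset.mem_univ i))
  refine ⟨?_, ?_⟩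
  · ext k i
    exact congrFun (mulVec_eq_of_dotProduct_mulVec_eq_one hG (hu i) (hv i) (heq i)) k
  · have hGU : Gᵀ * U = V := by
      ext k i
      refine congrFun (mulVec_eq_of_dotProduct_mulVec_eq_one (opNorm_transpose_le_one hG)
        (hv i) (hu i) ?_) k
      rw [← transpose_mulVec_dotProduct, transpose_transpose, dotProduct_comm, heq i]
    simpa using congrArg transpose hGU

lemma opNorm_sub_mul_transpose_le_one (hU : Uᵀ * U = 1) {G : Matrix (Fin m) (Fin n) ℝ}
    (hG : opNorm G ≤ 1) (hUG : Uᵀ * G = Vᵀ) : opNorm (G - U * Vᵀ) ≤ 1 := by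
  have hGU : Gᵀ * U = V := by simpa using congrArg transpose hUG
  have hgram : (G - U * Vᵀ)ᵀ * (G - U * Vᵀ) = Gᵀ * G - V * Vᵀ := by
    simp only [transpose_sub, transpose_mul, transpose_transpose, Matrix.sub_mul, Matrix.mul_sub,
      ← Matrix.mul_assoc, hGU]
    simp only [Matrix.mul_assoc, hUG, hU, Matrix.one_mul, sub_self, sub_zero]
  rw [opNorm_le_one_iff]
  intro y
  have hVy := mulVec_dotProduct_mulVec_self Vᵀ y
  rw [transpose_transpose] at hVy
  rw [mulVec_dotProduct_mulVec_self, hgram, sub_mulVec, dotProduct_sub, ← hVy,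
    ← mulVec_dotProduct_mulVec_self]
  linarith [(opNorm_le_one_iff G).1 hG y, dotProduct_self_nonneg (Vᵀ *ᵥ y)]

lemma opNorm_mul_transpose_add_le_one (hU : Uᵀ * U = 1) (hV : Vᵀ * V = 1)
    {T : Matrix (Fin m) (Fin n) ℝ} (hUT : Uᵀ * T = 0) (hTV : T * V = 0) (hT : opNorm T ≤ 1) :
    opNorm (U * Vᵀ + T) ≤ 1 := by
  have hTU : Tᵀ * U = 0 := by simpa using congrArg transpose hUT
  have hgram : (U * Vᵀ + T)ᵀ * (U * Vᵀ + T) = V * Vᵀ + Tᵀ * T := by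
    simp only [transpose_add, transpose_mul, transpose_transpose, Matrix.add_mul, Matrix.mul_add,
      Matrix.mul_assoc]
    rw [← Matrix.mul_assoc Uᵀ U, hU, hUT, ← Matrix.mul_assoc Tᵀ U, hTU]
    simp only [Matrix.one_mul, Matrix.mul_zero, Matrix.zero_mul, add_zero, zero_add]
  have hTy y : T *ᵥ y = T *ᵥ (y - V *ᵥ (Vᵀ *ᵥ y)) := by
    rw [mulVec_sub, mulVec_mulVec, hTV, zero_mulVec, sub_zero]
  rw [opNorm_le_one_iff]
  intro y
  have hVy := mulVec_dotProduct_mulVec_self Vᵀ y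
  rw [transpose_transpose] at hVy
  rw [mulVec_dotProduct_mulVec_self, hgram, add_mulVec, dotProduct_add, ← hVy,
    ← mulVec_dotProduct_mulVec_self, hTy]
  linarith [(opNorm_le_one_iff T).1 hT (y - V *ᵥ (Vᵀ *ᵥ y)), sub_mulVec_dotProduct_sub_mulVec hV y]

end SingularValueDecomposition

/-- **Subdifferential of the nuclear norm.** Let `Z = U Σ Vᵀ` be a skinny SVD
(`Uᵀ U = 1`, `Vᵀ V = 1`, `Σ` diagonal with positive entries). Then the subdifferential of the
nuclear norm at `Z` equals `{U Vᵀ + T : Uᵀ T = 0, T V = 0, ‖T‖ ≤ 1}`. -/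
theorem subdifferential_nuclearNorm (m n r : ℕ)
    (Z : Matrix (Fin m) (Fin n) ℝ)
    (U : Matrix (Fin m) (Fin r) ℝ) (V : Matrix (Fin n) (Fin r) ℝ)
    (hU : Uᵀ * U = 1) (hV : Vᵀ * V = 1)
    (σ : Fin r → ℝ) (hσpos : ∀ i, 0 < σ i)
    (hZ : Z = U * Matrix.diagonal σ * Vᵀ) :
    {G : Matrix (Fin m) (Fin n) ℝ |
        ∀ W : Matrix (Fin m) (Fin n) ℝ,
          nuclearNorm Z + (Gᵀ * (W - Z)).trace ≤ nuclearNorm W} =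
      {G : Matrix (Fin m) (Fin n) ℝ |
        ∃ T : Matrix (Fin m) (Fin n) ℝ,
          Uᵀ * T = 0 ∧ T * V = 0 ∧ opNorm T ≤ 1 ∧ G = U * Vᵀ + T} := by
  have hZnorm : nuclearNorm Z = ∑ i, σ i := by
    rw [hZ, nuclearNorm_mul_diagonal_mul_transpose hU hV fun i => (hσpos i).le]
  have hZZ : nuclearNorm (Z + Z) = 2 * nuclearNorm Z := by
    rw [hZnorm, hZ, ← Matrix.add_mul, ← Matrix.mul_add, diagonal_add,
      nuclearNorm_mul_diagonal_mul_transpose hU hV fun i => by linarith [hσpos i],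
      Finset.sum_add_distrib, two_mul]
  ext G
  rw [Set.mem_ofPred, Set.mem_ofPred, forall_add_trace_le_iff nuclearNorm_zero hZZ, hZnorm, hZ]
  constructor
  · rintro ⟨hdual, htrace⟩
    have hG := (opNorm_le_one_iff_forall_trace_le G).2 hdual
    obtain ⟨hGV, hUG⟩ := mul_eq_and_transpose_mul_eq_of_trace_eq hU hV hσpos hG htrace
    refine ⟨G - U * Vᵀ, ?_, ?_, opNorm_sub_mul_transpose_le_one hU hG hUG, by abel⟩
    · rw [Matrix.mul_sub, hUG, ← Matrix.mul_assoc, hU, Matrix.one_mul, sub_self]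
    · rw [Matrix.sub_mul, hGV, Matrix.mul_assoc, hV, Matrix.mul_one, sub_self]
  · rintro ⟨T, hUT, hTV, hT, rfl⟩
    have hGV : (U * Vᵀ + T) * V = U := by
      rw [Matrix.add_mul, Matrix.mul_assoc, hV, Matrix.mul_one, hTV, add_zero]
    have hG := opNorm_mul_transpose_add_le_one hU hV hUT hTV hT
    exact ⟨(opNorm_le_one_iff_forall_trace_le _).1 hG,
      trace_transpose_mul_mul_diagonal_mul_transpose_of_mul_eq hU hGV σ⟩
end

section
/- Under the setting of the multi-branch problem, the duality gap satisfies 0 ≤ inf(P) − sup(D) ≤ (2/I) Δ_worst, where the primal is min_{w ∈ W_1×...×W_I} E[ℓ_τ(w; x, y)] subject to (1/I)Σ_i h_i(w_(i)) ≤ K with ℓ_τ the average of I branch losses, and Δ_worst bounds the per-branch gap between each branch objective and its convex relaxation. -/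
open scoped BigOperators
open MeasureTheory
open Set Filter Topology Finset

/-!
For every multiplier `λ ≥ 0` the Lagrangian separates over the branches, so it has branchwise
minimizers, and limits of minimizers are minimizers. Either the minimizers approach feasibility as
`λ → ∞` (or are feasible at `λ = 0`), and their limit is a feasible point of value at most
`sup(D)`; or, at the infimum of the multipliers admitting a feasible minimizer, there are two
minimizers `w`, `u` whose average regularizers straddle `K`. In the second case interpolate
branchwise between `w` and `u`: one linear equation on the weights `θ ∈ [0, 1]^I` can be solved
with all weights but one in `{0, 1}`, so the interpolation meets the budget exactly, has the
Lagrangian value of `w`, and only one branch sits at a genuine convex combination. Replacing that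
branch by the best point of the matching sublevel set of its regularizer costs at most `Δ_worst`,
whence `inf(P) ≤ sup(D) + Δ_worst / I`.
-/

noncomputable section

theorem exists_weights_sum_mul_eq_of_mem_Icc {ι : Type*} [Fintype ι] [Nonempty ι]
    (d : ι → ℝ) {c : ℝ} (hc : c ∈ Icc 0 (∑ i, d i)) :
    ∃ θ : ι → ℝ, (∀ i, θ i ∈ Icc (0 : ℝ) 1) ∧ ∑ i, θ i * d i = c ∧
      ∃ j, ∀ i ≠ j, θ i = 0 ∨ θ i = 1 := by
  classical
  suffices key : ∀ s : Finset ι, ∀ c ∈ Icc 0 (∑ i ∈ s, d i),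
      ∃ θ : ι → ℝ, (∀ i, θ i ∈ Icc (0 : ℝ) 1) ∧ ∑ i ∈ s, θ i * d i = c ∧
        ∃ j, ∀ i ≠ j, θ i = 0 ∨ θ i = 1 from key _ c hc
  intro s
  induction s using Finset.induction_on with
  | empty =>
    rintro c ⟨hc0, hc1⟩
    exact ⟨0, fun _ => by simp, by simp at hc1 ⊢; linarith, Classical.arbitrary ι,
      fun _ _ => by simp⟩
  | insert a s ha ih =>
    rintro c ⟨hc0, hc1⟩
    rw [Finset.sum_insert ha] at hc1
    have extend : ∀ θ : ι → ℝ, ∀ x, (∑ i ∈ s, θ i * d i = c - x * d a) →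
        ∑ i ∈ insert a s, Function.update θ a x i * d i = c := by
      intro θ x hθ
      rw [Finset.sum_insert ha, Function.update_self,
        Finset.sum_congr rfl fun i hi => by rw [Function.update_of_ne (ne_of_mem_of_not_mem hi ha)],
        hθ]
      ring
    have extend_binary : ∀ x, (x = 0 ∨ x = 1) → ∀ c' ∈ Icc 0 (∑ i ∈ s, d i), c' = c - x * d a →
        ∃ θ : ι → ℝ, (∀ i, θ i ∈ Icc (0 : ℝ) 1) ∧ ∑ i ∈ insert a s, θ i * d i = c ∧
          ∃ j, ∀ i ≠ j, θ i = 0 ∨ θ i = 1 := by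
      rintro x hx c' hc' rfl
      obtain ⟨θ, hθ, hsum, j, hj⟩ := ih _ hc'
      refine ⟨Function.update θ a x, fun i => ?_, extend θ x hsum, j, fun i hi => ?_⟩ <;>
        rcases eq_or_ne i a with rfl | hia <;> rcases hx with rfl | rfl <;> simp [*]
    by_cases hcs : c ≤ ∑ i ∈ s, d i
    · exact extend_binary 0 (.inl rfl) c ⟨hc0, hcs⟩ (by ring)
    by_cases hca : d a ≤ c
    · exact extend_binary 1 (.inr rfl) (c - d a) ⟨by linarith, by linarith⟩ (by ring)
    -- otherwise `∑ i ∈ s, d i < c < d a`, and the new coordinate alone carries `c`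
    push Not at hcs hca
    have hda : 0 < d a := by linarith
    refine ⟨Function.update 0 a (c / d a), fun i => ?_, extend 0 _ (by field_simp; simp),
      a, fun i hi => by simp [hi]⟩
    rcases eq_or_ne i a with rfl | hi
    · simpa using ⟨by positivity, (div_le_one hda).2 hca.le⟩
    · simp [hi]

theorem ContinuousOn.tendsto_comp_of_mem {X Y α : Type*} [TopologicalSpace X] [TopologicalSpace Y]
    {f : X → Y} {s : Set X} (hf : ContinuousOn f s) {x : X} (hx : x ∈ s) {l : Filter α}
    {xs : α → X} (hxs : ∀ n, xs n ∈ s) (hlim : Tendsto xs l (𝓝 x)) :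
    Tendsto (fun n => f (xs n)) l (𝓝 (f x)) :=
  (hf x hx).tendsto.comp (tendsto_nhdsWithin_iff.2 ⟨hlim, .of_forall hxs⟩)

section SingleBranch

variable {m : ℕ}

def convexCombinationValues (W : Set (Fin m → ℝ)) (g : (Fin m → ℝ) → ℝ) (w : Fin m → ℝ) :
    Set ℝ :=
  {v | ∃ (a : Fin (m + 1) → ℝ) (u : Fin (m + 1) → (Fin m → ℝ)),
    (∀ j, 0 ≤ a j) ∧ ∑ j, a j = 1 ∧ (∀ j, u j ∈ W) ∧ ∑ j, a j • u j = w ∧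
      v = ∑ j, a j * g (u j)}

def convexRelaxation (W : Set (Fin m → ℝ)) (g : (Fin m → ℝ) → ℝ) (w : Fin m → ℝ) : ℝ :=
  sInf (convexCombinationValues W g w)

def sublevelValue {E : Type*} (W : Set E) (g h : E → ℝ) (w : E) : ℝ :=
  sInf {v | ∃ u ∈ W, h u ≤ h w ∧ v = g u}

def nonconvexityGap (W : Set (Fin m → ℝ)) (g h : (Fin m → ℝ) → ℝ) : ℝ :=
  sSup {v | ∃ w ∈ W, v = sublevelValue W g h w - convexRelaxation W g w}

theorem sublevelValue_le {E : Type*} {W : Set E} {g h : E → ℝ} (hg : BddBelow (g '' W))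
    {u w : E} (hu : u ∈ W) (huw : h u ≤ h w) : sublevelValue W g h w ≤ g u := by
  obtain ⟨c, hc⟩ := hg
  refine csInf_le ⟨c, ?_⟩ ⟨u, hu, huw, rfl⟩
  rintro _ ⟨u', hu', -, rfl⟩
  exact hc ⟨u', hu', rfl⟩

theorem le_sublevelValue {E : Type*} {W : Set E} {g h : E → ℝ} {c : ℝ} (hc : ∀ u ∈ W, c ≤ g u)
    {w : E} (hw : w ∈ W) : c ≤ sublevelValue W g h w :=
  le_csInf ⟨g w, w, hw, le_rfl, rfl⟩ fun _ ⟨u, hu, _, hv⟩ => hv ▸ hc u hu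

theorem exists_eq_sublevelValue {E : Type*} [TopologicalSpace E] {W : Set E} {g h : E → ℝ}
    (hW : IsCompact W) (hg : ContinuousOn g W) (hh : ContinuousOn h W) {w : E} (hw : w ∈ W) :
    ∃ v ∈ W, h v ≤ h w ∧ g v = sublevelValue W g h w := by
  obtain ⟨v, ⟨hvW, hvh⟩, hmin⟩ :=
    (hh.lowerSemicontinuousOn.isCompact_inter_preimage_Iic hW (h w)).exists_isMinOn
      ⟨w, hw, le_refl (h w)⟩ (hg.mono inter_subset_left)
  have hleast : IsLeast {x | ∃ u ∈ W, h u ≤ h w ∧ x = g u} (g v) :=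
    ⟨⟨v, hvW, hvh, rfl⟩, by rintro _ ⟨u, huW, huh, rfl⟩; exact hmin ⟨huW, huh⟩⟩
  exact ⟨v, hvW, hvh, hleast.csInf_eq.symm⟩

variable {W : Set (Fin m → ℝ)} {g h : (Fin m → ℝ) → ℝ}

theorem two_point_mem_convexCombinationValues {a b : Fin m → ℝ} (ha : a ∈ W) (hb : b ∈ W)
    {t : ℝ} (ht : t ∈ Icc (0 : ℝ) 1) :
    (1 - t) * g a + t * g b ∈ convexCombinationValues W g ((1 - t) • a + t • b) := by
  classical
  rcases Nat.eq_zero_or_pos m with rfl | hm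
  · obtain rfl : a = b := Subsingleton.elim a b
    refine ⟨Pi.single 0 1, fun _ => a, fun j => ?_, by simp, fun _ => ha, ?_, ?_⟩
    · rcases eq_or_ne j 0 with rfl | hj <;> simp [*]
    · simp
    · simp; ring
  have h01 : (0 : Fin (m + 1)) ≠ Fin.last m := by simp [Fin.ext_iff]; omega
  refine ⟨Pi.single 0 (1 - t) + Pi.single (Fin.last m) t, fun j => if j = 0 then a else b,
    fun j => ?_, ?_, fun j => ?_, ?_, ?_⟩
  · rcases eq_or_ne j 0 with rfl | hj0
    · simp [h01, ht.2]
    rcases eq_or_ne j (Fin.last m) with rfl | hjl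
    · simp [hj0, ht.1]
    · simp [hj0, hjl]
  · simp [Finset.sum_add_distrib]
  · dsimp only; split_ifs <;> assumption
  · simp only [Pi.add_apply, add_smul, Finset.sum_add_distrib, Pi.single_apply, ite_smul,
      zero_smul, Finset.sum_ite_eq', Finset.mem_univ, if_true, if_neg h01.symm]
  · simp only [Pi.add_apply, add_mul, Finset.sum_add_distrib, Pi.single_apply, ite_mul, zero_mul,
      Finset.sum_ite_eq', Finset.mem_univ, if_true, if_neg h01.symm]

theorem le_of_mem_convexCombinationValues {c : ℝ} (hc : ∀ u ∈ W, c ≤ g u) {w : Fin m → ℝ}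
    {v : ℝ} (hv : v ∈ convexCombinationValues W g w) : c ≤ v := by
  obtain ⟨a, u, ha0, ha1, huW, -, rfl⟩ := hv
  calc c = ∑ j, a j * c := by rw [← Finset.sum_mul, ha1, one_mul]
    _ ≤ ∑ j, a j * g (u j) := by gcongr with j; exacts [ha0 j, hc _ (huW j)]

theorem convexRelaxation_le (hg : BddBelow (g '' W)) {a b : Fin m → ℝ} (ha : a ∈ W) (hb : b ∈ W)
    {t : ℝ} (ht : t ∈ Icc (0 : ℝ) 1) :
    convexRelaxation W g ((1 - t) • a + t • b) ≤ (1 - t) * g a + t * g b := by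
  obtain ⟨c, hc⟩ := hg
  exact csInf_le ⟨c, fun _ => le_of_mem_convexCombinationValues fun u hu => hc ⟨u, hu, rfl⟩⟩
    (two_point_mem_convexCombinationValues ha hb ht)

theorem convexRelaxation_le_self (hg : BddBelow (g '' W)) {w : Fin m → ℝ} (hw : w ∈ W) :
    convexRelaxation W g w ≤ g w := by
  simpa using convexRelaxation_le hg hw hw (t := 0) (by simp)

theorem le_convexRelaxation {c : ℝ} (hc : ∀ u ∈ W, c ≤ g u) {w : Fin m → ℝ} (hw : w ∈ W) :
    c ≤ convexRelaxation W g w := by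
  have hmem : g w ∈ convexCombinationValues W g w := by
    simpa using two_point_mem_convexCombinationValues (g := g) hw hw (t := 0) (by simp)
  exact le_csInf ⟨g w, hmem⟩ fun _ => le_of_mem_convexCombinationValues hc

theorem sublevelValue_sub_convexRelaxation_le_nonconvexityGap (hW : IsCompact W)
    (hg : ContinuousOn g W) {w : Fin m → ℝ} (hw : w ∈ W) :
    sublevelValue W g h w - convexRelaxation W g w ≤ nonconvexityGap W g h := by
  obtain ⟨c, hc⟩ := hW.bddBelow_image hg
  obtain ⟨M, hM⟩ := hW.bddAbove_image hg
  refine le_csSup ⟨M - c, ?_⟩ ⟨w, hw, rfl⟩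
  rintro _ ⟨u, hu, rfl⟩
  have h1 := sublevelValue_le (h := h) ⟨c, hc⟩ hu le_rfl
  have h2 := le_convexRelaxation (fun u hu => hc ⟨u, hu, rfl⟩) hu
  linarith [hM ⟨u, hu, rfl⟩]

theorem nonconvexityGap_nonneg (hW : IsCompact W) (hne : W.Nonempty) (hg : ContinuousOn g W) :
    0 ≤ nonconvexityGap W g h := by
  obtain ⟨z, hz, hmin⟩ := hW.exists_isMinOn hne hg
  have h1 := le_sublevelValue (h := h) (fun u hu => hmin hu) hz
  have h2 := convexRelaxation_le_self (hW.bddBelow_image hg) hz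
  linarith [sublevelValue_sub_convexRelaxation_le_nonconvexityGap (h := h) hW hg hz]

theorem exists_le_convexCombination_add_nonconvexityGap (hW : IsCompact W) (hWc : Convex ℝ W)
    (hg : ContinuousOn g W) (hh : ContinuousOn h W) (hhc : ConvexOn ℝ W h)
    {a b : Fin m → ℝ} (ha : a ∈ W) (hb : b ∈ W) {t : ℝ} (ht : t ∈ Icc (0 : ℝ) 1) :
    ∃ v ∈ W, h v ≤ (1 - t) * h a + t * h b ∧
      g v ≤ (1 - t) * g a + t * g b + nonconvexityGap W g h := by
  have hz : (1 - t) • a + t • b ∈ W := hWc ha hb (by linarith [ht.2]) ht.1 (by ring)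
  obtain ⟨v, hv, hvh, hvg⟩ := exists_eq_sublevelValue hW hg hh hz
  refine ⟨v, hv, hvh.trans ?_, ?_⟩
  · simpa only [smul_eq_mul] using hhc.2 ha hb (by linarith [ht.2]) ht.1 (by ring)
  · have := sublevelValue_sub_convexRelaxation_le_nonconvexityGap (h := h) hW hg hz
    linarith [convexRelaxation_le (hW.bddBelow_image hg) ha hb ht]

end SingleBranch

section MultiBranch

variable {ι : Type*} {E : ι → Type*}

def IsLagrangianMin (W : ∀ i, Set (E i)) (φ h : ∀ i, E i → ℝ) (lam : ℝ) (w : ∀ i, E i) : Prop :=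
  ∀ i, w i ∈ W i ∧ IsMinOn (fun v => φ i v + lam * h i v) (W i) (w i)

theorem IsLagrangianMin.add_mul_eq {W : ∀ i, Set (E i)} {φ h : ∀ i, E i → ℝ} {lam : ℝ}
    {w u : ∀ i, E i} (hw : IsLagrangianMin W φ h lam w) (hu : IsLagrangianMin W φ h lam u) (i : ι) :
    φ i (u i) + lam * h i (u i) = φ i (w i) + lam * h i (w i) :=
  le_antisymm ((hu i).2 (hw i).1) ((hw i).2 (hu i).1)

section Minimizers

variable {W : ∀ i, Set (E i)} {φ h : ∀ i, E i → ℝ} {lam : ℝ} {w : ∀ i, E i}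
  [∀ i, TopologicalSpace (E i)]

theorem exists_isLagrangianMin (hW : ∀ i, IsCompact (W i)) (hne : ∀ i, (W i).Nonempty)
    (hφ : ∀ i, ContinuousOn (φ i) (W i)) (hh : ∀ i, ContinuousOn (h i) (W i)) (lam : ℝ) :
    ∃ w, IsLagrangianMin W φ h lam w := by
  choose w hw using fun i =>
    (hW i).exists_isMinOn (hne i) ((hφ i).add (continuousOn_const.mul (hh i)))
  exact ⟨w, hw⟩

theorem IsLagrangianMin.of_tendsto (hφ : ∀ i, ContinuousOn (φ i) (W i))
    (hh : ∀ i, ContinuousOn (h i) (W i)) {lams : ℕ → ℝ} {ws : ℕ → ∀ i, E i}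
    (hws : ∀ n, IsLagrangianMin W φ h (lams n) (ws n)) (hlam : Tendsto lams atTop (𝓝 lam))
    (hw : ∀ i, w i ∈ W i) (hlim : Tendsto ws atTop (𝓝 w)) : IsLagrangianMin W φ h lam w := by
  refine fun i => ⟨hw i, fun v hv => ?_⟩
  have hwsi : Tendsto (fun n => ws n i) atTop (𝓝 (w i)) := tendsto_pi_nhds.1 hlim i
  have hmem : ∀ n, ws n i ∈ W i := fun n => (hws n i).1
  exact le_of_tendsto_of_tendsto'
    (((hφ i).tendsto_comp_of_mem (hw i) hmem hwsi).add
      (hlam.mul ((hh i).tendsto_comp_of_mem (hw i) hmem hwsi)))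
    (tendsto_const_nhds.add (hlam.mul tendsto_const_nhds)) fun n => (hws n i).2 hv

end Minimizers

variable [Fintype ι]

def branchAverage (F : ∀ i, E i → ℝ) (w : ∀ i, E i) : ℝ :=
  (1 / Fintype.card ι : ℝ) * ∑ i, F i (w i)

def IsFeasible (W : ∀ i, Set (E i)) (h : ∀ i, E i → ℝ) (K : ℝ) (w : ∀ i, E i) : Prop :=
  (∀ i, w i ∈ W i) ∧ branchAverage h w ≤ K

def primalValue (W : ∀ i, Set (E i)) (φ h : ∀ i, E i → ℝ) (K : ℝ) : ℝ :=
  sInf {v | ∃ w, IsFeasible W h K w ∧ v = branchAverage φ w}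

def lagrangian (φ h : ∀ i, E i → ℝ) (K lam : ℝ) (w : ∀ i, E i) : ℝ :=
  (1 / Fintype.card ι : ℝ) * ∑ i, φ i (w i) + (lam / Fintype.card ι) * ∑ i, h i (w i) - lam * K

def dualFunction (W : ∀ i, Set (E i)) (φ h : ∀ i, E i → ℝ) (K lam : ℝ) : ℝ :=
  sInf {u | ∃ w : ∀ i, E i, (∀ i, w i ∈ W i) ∧ u = lagrangian φ h K lam w}

def dualValue (W : ∀ i, Set (E i)) (φ h : ∀ i, E i → ℝ) (K : ℝ) : ℝ :=
  sSup {v | ∃ lam : ℝ, 0 ≤ lam ∧ v = dualFunction W φ h K lam}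

variable {W : ∀ i, Set (E i)} {φ h : ∀ i, E i → ℝ} {K lam : ℝ} {w u v : ∀ i, E i}

theorem branchAverage_le_branchAverage {F G : ∀ i, E i → ℝ} (hFG : ∀ i, F i (w i) ≤ G i (v i)) :
    branchAverage F w ≤ branchAverage G v :=
  mul_le_mul_of_nonneg_left (sum_le_sum fun i _ => hFG i) (by positivity)

theorem branchAverage_le_iff [Nonempty ι] {F : ∀ i, E i → ℝ} {c : ℝ} :
    branchAverage F w ≤ c ↔ ∑ i, F i (w i) ≤ Fintype.card ι * c := by
  rw [branchAverage, one_div, inv_mul_le_iff₀ (by positivity)]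

theorem le_branchAverage_iff [Nonempty ι] {F : ∀ i, E i → ℝ} {c : ℝ} :
    c ≤ branchAverage F w ↔ Fintype.card ι * c ≤ ∑ i, F i (w i) := by
  rw [branchAverage, one_div, le_inv_mul_iff₀ (by positivity)]

theorem lagrangian_eq_add_mul :
    lagrangian φ h K lam w = branchAverage φ w + lam * (branchAverage h w - K) := by
  unfold lagrangian branchAverage; ring

theorem lagrangian_eq_branchAverage_sub :
    lagrangian φ h K lam w = branchAverage (fun i v => φ i v + lam * h i v) w - lam * K := by
  unfold lagrangian branchAverage; rw [sum_add_distrib, ← mul_sum]; ring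

theorem lagrangian_le_branchAverage (hlam : 0 ≤ lam) (hw : branchAverage h w ≤ K) :
    lagrangian φ h K lam w ≤ branchAverage φ w := by
  rw [lagrangian_eq_add_mul]; nlinarith

theorem branchAverage_le_lagrangian (hlam : 0 ≤ lam) (hw : K ≤ branchAverage h w) :
    branchAverage φ w ≤ lagrangian φ h K lam w := by
  rw [lagrangian_eq_add_mul]; nlinarith

theorem IsLagrangianMin.lagrangian_le (hw : IsLagrangianMin W φ h lam w) (hv : ∀ i, v i ∈ W i) :
    lagrangian φ h K lam w ≤ lagrangian φ h K lam v := by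
  simp only [lagrangian_eq_branchAverage_sub]
  gcongr ?_ - _
  exact branchAverage_le_branchAverage fun i => (hw i).2 (hv i)

theorem IsLagrangianMin.branchAverage_le (hw : IsLagrangianMin W φ h 0 w) (hv : ∀ i, v i ∈ W i) :
    branchAverage φ w ≤ branchAverage φ v := by
  simpa [lagrangian_eq_add_mul] using hw.lagrangian_le (K := 0) hv

theorem IsLagrangianMin.dualFunction_eq (hw : IsLagrangianMin W φ h lam w) :
    dualFunction W φ h K lam = lagrangian φ h K lam w := by
  refine IsLeast.csInf_eq ⟨⟨w, fun i => (hw i).1, rfl⟩, ?_⟩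
  rintro _ ⟨v, hv, rfl⟩
  exact hw.lagrangian_le hv

theorem dualFunction_le_branchAverage (hw : IsLagrangianMin W φ h lam w) (hlam : 0 ≤ lam)
    (hv : IsFeasible W h K v) : dualFunction W φ h K lam ≤ branchAverage φ v :=
  hw.dualFunction_eq ▸ (hw.lagrangian_le hv.1).trans (lagrangian_le_branchAverage hlam hv.2)

theorem dualFunction_le_dualValue (hmin : ∀ lam, ∃ w, IsLagrangianMin W φ h lam w)
    (hv : IsFeasible W h K v) (hlam : 0 ≤ lam) :
    dualFunction W φ h K lam ≤ dualValue W φ h K := by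
  refine le_csSup ⟨branchAverage φ v, ?_⟩ ⟨lam, hlam, rfl⟩
  rintro _ ⟨lam', hlam', rfl⟩
  obtain ⟨w, hw⟩ := hmin lam'
  exact dualFunction_le_branchAverage hw hlam' hv

theorem dualValue_le_primalValue (hmin : ∀ lam, ∃ w, IsLagrangianMin W φ h lam w)
    (hfeas : ∃ v, IsFeasible W h K v) : dualValue W φ h K ≤ primalValue W φ h K := by
  refine csSup_le ⟨_, 0, le_rfl, rfl⟩ ?_
  rintro _ ⟨lam, hlam, rfl⟩
  obtain ⟨w, hw⟩ := hmin lam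
  obtain ⟨v, hv⟩ := hfeas
  refine le_csInf ⟨_, v, hv, rfl⟩ ?_
  rintro _ ⟨v', hv', rfl⟩
  exact dualFunction_le_branchAverage hw hlam hv'

theorem primalValue_le_branchAverage (hmin : ∀ lam, ∃ w, IsLagrangianMin W φ h lam w)
    (hv : IsFeasible W h K v) : primalValue W φ h K ≤ branchAverage φ v := by
  obtain ⟨w, hw⟩ := hmin 0
  refine csInf_le ⟨dualFunction W φ h K 0, ?_⟩ ⟨v, hv, rfl⟩
  rintro _ ⟨v', hv', rfl⟩
  exact dualFunction_le_branchAverage hw le_rfl hv'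

theorem exists_feasible_le_lagrangian_add_of_straddle [Nonempty ι] {δ : ℝ}
    (hδ : ∀ i, ∀ a ∈ W i, ∀ b ∈ W i, ∀ t ∈ Icc (0 : ℝ) 1, ∃ v ∈ W i,
      h i v ≤ (1 - t) * h i a + t * h i b ∧ φ i v ≤ (1 - t) * φ i a + t * φ i b + δ)
    (hw : IsLagrangianMin W φ h lam w) (hu : IsLagrangianMin W φ h lam u)
    (hwK : branchAverage h w ≤ K) (huK : K ≤ branchAverage h u) :
    ∃ v, IsFeasible W h K v ∧
      branchAverage φ v ≤ lagrangian φ h K lam w + δ / Fintype.card ι := by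
  classical
  set n : ℝ := (Fintype.card ι : ℝ) with hn_def
  have hn : 0 < n := Nat.cast_pos.2 Fintype.card_pos
  have hwK' : ∑ i, h i (w i) ≤ n * K := branchAverage_le_iff.1 hwK
  have huK' : n * K ≤ ∑ i, h i (u i) := le_branchAverage_iff.1 huK
  obtain ⟨θ, hθ, hθsum, j, hj⟩ := exists_weights_sum_mul_eq_of_mem_Icc
    (fun i => h i (u i) - h i (w i)) (c := n * K - ∑ i, h i (w i))
    ⟨by linarith, by rw [sum_sub_distrib]; linarith⟩
  -- branch `i` moves to the `θ i`-interpolation of `w i` and `u i`; only the one branch with a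
  -- fractional weight needs the relaxation gap
  have hbranch : ∀ i, ∃ v ∈ W i, h i v ≤ (1 - θ i) * h i (w i) + θ i * h i (u i) ∧
      φ i v ≤ (1 - θ i) * φ i (w i) + θ i * φ i (u i) + if i = j then δ else 0 := by
    intro i
    by_cases hij : i = j
    · simpa [hij] using hδ i _ (hw i).1 _ (hu i).1 _ (hθ i)
    · rcases hj i hij with h0 | h1
      · exact ⟨w i, (hw i).1, by simp [h0], by simp [h0, hij]⟩
      · exact ⟨u i, (hu i).1, by simp [h1], by simp [h1, hij]⟩
  choose v hvW hvh hvφ using hbranch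
  have hinterp : ∑ i, ((1 - θ i) * h i (w i) + θ i * h i (u i)) = n * K := by
    rw [← add_sub_cancel (∑ i, h i (w i)) (n * K), ← hθsum, ← sum_add_distrib]
    exact sum_congr rfl fun i _ => by ring
  have hsum_h : ∑ i, h i (v i) ≤ n * K := hinterp ▸ sum_le_sum fun i _ => hvh i
  have hsum_φ : ∑ i, φ i (v i) ≤ ∑ i, φ i (w i) + lam * ∑ i, h i (w i) - lam * (n * K) + δ := calc
    ∑ i, φ i (v i)
      ≤ ∑ i, (φ i (w i) + lam * h i (w i) - lam * ((1 - θ i) * h i (w i) + θ i * h i (u i)) +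
          if i = j then δ else 0) := by
      refine sum_le_sum fun i _ => (hvφ i).trans_eq ?_
      linear_combination θ i * hw.add_mul_eq hu i
    _ = ∑ i, φ i (w i) + lam * ∑ i, h i (w i) - lam * (n * K) + δ := by
      simp only [sum_add_distrib, sum_sub_distrib, ← mul_sum, hinterp, sum_ite_eq', Finset.mem_univ,
        if_true]
  refine ⟨v, ⟨hvW, ?_⟩, ?_⟩
  · exact branchAverage_le_iff.2 hsum_h
  · unfold branchAverage lagrangian; rw [← hn_def]
    calc 1 / n * ∑ i, φ i (v i)
        ≤ 1 / n * (∑ i, φ i (w i) + lam * ∑ i, h i (w i) - lam * (n * K) + δ) := by gcongr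
      _ = _ := by field_simp

section Compactness

variable [∀ i, TopologicalSpace (E i)]

theorem tendsto_branchAverage {F : ∀ i, E i → ℝ} (hF : ∀ i, ContinuousOn (F i) (W i))
    {ws : ℕ → ∀ i, E i} (hws : ∀ n i, ws n i ∈ W i) (hw : ∀ i, w i ∈ W i)
    (hlim : Tendsto ws atTop (𝓝 w)) :
    Tendsto (fun n => branchAverage F (ws n)) atTop (𝓝 (branchAverage F w)) :=
  (tendsto_finsetSum _ fun i _ =>
    (hF i).tendsto_comp_of_mem (hw i) (hws · i) (tendsto_pi_nhds.1 hlim i)).const_mul _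

theorem exists_isLagrangianMin_branchAverage_mem_of_tendsto [∀ i, FirstCountableTopology (E i)]
    (hW : ∀ i, IsCompact (W i))
    (hφ : ∀ i, ContinuousOn (φ i) (W i)) (hh : ∀ i, ContinuousOn (h i) (W i)) {S : Set ℝ}
    (hS : IsClosed S) {lams : ℕ → ℝ} {ws : ℕ → ∀ i, E i}
    (hws : ∀ n, IsLagrangianMin W φ h (lams n) (ws n) ∧ branchAverage h (ws n) ∈ S)
    (hlam : Tendsto lams atTop (𝓝 lam)) :
    ∃ w, IsLagrangianMin W φ h lam w ∧ branchAverage h w ∈ S := by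
  have hmem : ∀ n i, ws n i ∈ W i := fun n i => ((hws n).1 i).1
  obtain ⟨w, hw, σ, hσ, hlim⟩ :=
    (isCompact_univ_pi hW).tendsto_subseq fun n => mem_univ_pi.2 (hmem n)
  rw [mem_univ_pi] at hw
  refine ⟨w, IsLagrangianMin.of_tendsto hφ hh (fun n => (hws (σ n)).1)
    (hlam.comp hσ.tendsto_atTop) hw hlim, ?_⟩
  exact hS.mem_of_tendsto (tendsto_branchAverage hh (fun n => hmem (σ n)) hw hlim)
    (.of_forall fun n => (hws (σ n)).2)

theorem exists_straddle_of_isLagrangianMin_feasible [∀ i, FirstCountableTopology (E i)]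
    (hW : ∀ i, IsCompact (W i))
    (hne : ∀ i, (W i).Nonempty) (hφ : ∀ i, ContinuousOn (φ i) (W i))
    (hh : ∀ i, ContinuousOn (h i) (W i)) {lam₀ : ℝ} (hlam₀ : 0 ≤ lam₀)
    (hw₀ : IsLagrangianMin W φ h lam₀ w) (hw₀K : branchAverage h w ≤ K) :
    (∃ w, IsLagrangianMin W φ h 0 w ∧ branchAverage h w ≤ K) ∨
      ∃ lam, 0 ≤ lam ∧ ∃ w u, IsLagrangianMin W φ h lam w ∧ IsLagrangianMin W φ h lam u ∧
        branchAverage h w ≤ K ∧ K ≤ branchAverage h u := by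
  set J := {lam : ℝ | 0 ≤ lam ∧ ∃ w, IsLagrangianMin W φ h lam w ∧ branchAverage h w ∈ Iic K}
  have hJ : IsClosed J := by
    refine IsSeqClosed.isClosed fun lams lam hlams hlim => ⟨?_, ?_⟩
    · exact ge_of_tendsto' hlim fun n => (hlams n).1
    · choose ws hws using fun n => (hlams n).2
      exact exists_isLagrangianMin_branchAverage_mem_of_tendsto hW hφ hh isClosed_Iic hws hlim
  have hJbdd : BddBelow J := ⟨0, fun _ hlam => hlam.1⟩
  obtain ⟨hlam0, w, hw, hwK⟩ := hJ.csInf_mem ⟨lam₀, hlam₀, w, hw₀, hw₀K⟩ hJbdd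
  rcases hlam0.eq_or_lt with hzero | hpos
  · exact .inl ⟨w, hzero ▸ hw, hwK⟩
  -- below `sInf J` every Lagrangian minimizer overshoots the budget; pass to the limit
  obtain ⟨μ, -, hμ, hμlim⟩ := exists_seq_strictMono_tendsto' hpos
  have hover : ∀ n, ∃ u, IsLagrangianMin W φ h (μ n) u ∧ branchAverage h u ∈ Ici K := by
    intro n
    obtain ⟨u, hu⟩ := exists_isLagrangianMin hW hne hφ hh (μ n)
    refine ⟨u, hu, mem_Ici.2 <| not_lt.1 fun huK => (hμ n).2.not_ge (csInf_le hJbdd ?_)⟩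
    exact ⟨(hμ n).1.le, u, hu, huK.le⟩
  choose us hus using hover
  obtain ⟨u, hu, huK⟩ :=
    exists_isLagrangianMin_branchAverage_mem_of_tendsto hW hφ hh isClosed_Ici hus hμlim
  exact .inr ⟨sInf J, hlam0, w, u, hw, hu, hwK, huK⟩

theorem exists_feasible_branchAverage_le_dualValue_of_forall_lt [∀ i, FirstCountableTopology (E i)]
    (hW : ∀ i, IsCompact (W i))
    (hne : ∀ i, (W i).Nonempty) (hφ : ∀ i, ContinuousOn (φ i) (W i))
    (hh : ∀ i, ContinuousOn (h i) (W i)) (hv : IsFeasible W h K v)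
    (hover : ∀ lam, 0 ≤ lam → ∀ w, IsLagrangianMin W φ h lam w → K < branchAverage h w) :
    ∃ w, IsFeasible W h K w ∧ branchAverage φ w ≤ dualValue W φ h K := by
  have hmin := exists_isLagrangianMin hW hne hφ hh
  obtain ⟨w₀, hw₀⟩ := hmin 0
  choose ws hws using fun n : ℕ => hmin (n + 1)
  have hmem : ∀ n i, ws n i ∈ W i := fun n i => (hws n i).1
  -- as the multiplier grows, the budget overshoot of the minimizers is `O(1 / lam)`
  have hbudget : ∀ n : ℕ, branchAverage h (ws n) ≤
      K + (branchAverage φ v - branchAverage φ w₀) / (n + 1) := by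
    intro n
    have hle := ((hws n).lagrangian_le (K := K) hv.1).trans
      (lagrangian_le_branchAverage (by positivity) hv.2)
    rw [lagrangian_eq_add_mul] at hle
    have := hw₀.branchAverage_le (hmem n)
    rw [← sub_le_iff_le_add', le_div_iff₀ (by positivity)]
    nlinarith
  have hobj : ∀ n, branchAverage φ (ws n) ≤ dualValue W φ h K := fun n =>
    calc branchAverage φ (ws n) ≤ lagrangian φ h K (n + 1) (ws n) :=
          branchAverage_le_lagrangian (by positivity) (hover _ (by positivity) _ (hws n)).le
      _ = dualFunction W φ h K (n + 1) := (hws n).dualFunction_eq.symm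
      _ ≤ dualValue W φ h K := dualFunction_le_dualValue hmin hv (by positivity)
  obtain ⟨w, hw, σ, hσ, hlim⟩ :=
    (isCompact_univ_pi hW).tendsto_subseq fun n => mem_univ_pi.2 (hmem n)
  rw [mem_univ_pi] at hw
  have hσ' : Tendsto (fun n => (σ n : ℝ) + 1) atTop atTop :=
    tendsto_atTop_add_const_right _ 1
      ((tendsto_natCast_atTop_atTop (R := ℝ)).comp hσ.tendsto_atTop)
  have hrate : Tendsto (fun n => K + (branchAverage φ v - branchAverage φ w₀) / ((σ n : ℝ) + 1))
      atTop (𝓝 K) := by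
    simpa using tendsto_const_nhds.add (tendsto_const_nhds.div_atTop hσ')
  refine ⟨w, ⟨hw, ?_⟩, ?_⟩
  · exact le_of_tendsto_of_tendsto' (tendsto_branchAverage hh (fun n => hmem (σ n)) hw hlim)
      hrate fun n => hbudget (σ n)
  · exact le_of_tendsto' (tendsto_branchAverage hφ (fun n => hmem (σ n)) hw hlim)
      fun n => hobj (σ n)

theorem primalValue_le_dualValue_add [Nonempty ι] [∀ i, FirstCountableTopology (E i)]
    (hW : ∀ i, IsCompact (W i))
    (hφ : ∀ i, ContinuousOn (φ i) (W i)) (hh : ∀ i, ContinuousOn (h i) (W i))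
    (hfeas : ∃ v, IsFeasible W h K v) {δ : ℝ} (hδ₀ : 0 ≤ δ)
    (hδ : ∀ i, ∀ a ∈ W i, ∀ b ∈ W i, ∀ t ∈ Icc (0 : ℝ) 1, ∃ v ∈ W i,
      h i v ≤ (1 - t) * h i a + t * h i b ∧ φ i v ≤ (1 - t) * φ i a + t * φ i b + δ) :
    primalValue W φ h K ≤ dualValue W φ h K + δ / Fintype.card ι := by
  obtain ⟨v, hv⟩ := hfeas
  have hne : ∀ i, (W i).Nonempty := fun i => ⟨v i, hv.1 i⟩
  have hmin := exists_isLagrangianMin hW hne hφ hh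
  have hδn : 0 ≤ δ / Fintype.card ι := by positivity
  suffices ∃ w, IsFeasible W h K w ∧ branchAverage φ w ≤ dualValue W φ h K + δ / Fintype.card ι by
    obtain ⟨w, hw, hle⟩ := this
    exact (primalValue_le_branchAverage hmin hw).trans hle
  by_cases hJ : ∃ lam, 0 ≤ lam ∧ ∃ w, IsLagrangianMin W φ h lam w ∧ branchAverage h w ≤ K
  · obtain ⟨lam₀, hlam₀, w₀, hw₀, hw₀K⟩ := hJ
    rcases exists_straddle_of_isLagrangianMin_feasible hW hne hφ hh hlam₀ hw₀ hw₀K with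
      ⟨w, hw, hwK⟩ | ⟨lam, hlam, w, u, hw, hu, hwK, huK⟩
    · refine ⟨w, ⟨fun i => (hw i).1, hwK⟩, ?_⟩
      have hval : branchAverage φ w = dualFunction W φ h K 0 := by
        simp [hw.dualFunction_eq, lagrangian_eq_add_mul]
      linarith [dualFunction_le_dualValue hmin hv le_rfl]
    · obtain ⟨v', hv', hle⟩ := exists_feasible_le_lagrangian_add_of_straddle hδ hw hu hwK huK
      refine ⟨v', hv', hle.trans ?_⟩
      rw [← hw.dualFunction_eq]
      linarith [dualFunction_le_dualValue hmin hv hlam]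
  · push Not at hJ
    obtain ⟨w, hw, hle⟩ := exists_feasible_branchAverage_le_dualValue_of_forall_lt hW hne hφ hh hv hJ
    exact ⟨w, hw, by linarith⟩

end Compactness

end MultiBranch

end

theorem multibranch_duality_gap_general
    (I : ℕ) (hI : 0 < I) (p : Fin I → ℕ)
    (Wset : ∀ i : Fin I, Set (Fin (p i) → ℝ))
    (hWcpt : ∀ i, IsCompact (Wset i)) (hWcvx : ∀ i, Convex ℝ (Wset i))
    (h : ∀ i : Fin I, (Fin (p i) → ℝ) → ℝ)
    (hhcont : ∀ i, Continuous (h i)) (hhcvx : ∀ i, ConvexOn ℝ (Wset i) (h i))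
    -- the branch objectives `φ i w = E[1 − y f_i(w; x)/τ]`
    (φ : ∀ i : Fin I, (Fin (p i) → ℝ) → ℝ)
    (hφcont : ∀ i, ContinuousOn (φ i) (Wset i))
    (K : ℝ)
    -- the primal problem is feasible
    (hfeas : ∃ w : ∀ i : Fin I, Fin (p i) → ℝ, (∀ i, w i ∈ Wset i) ∧
      (1 / I : ℝ) * ∑ i, h i (w i) ≤ K)
    -- the convex relaxation `f̃ i` of the branch objective
    (ftilde : ∀ i : Fin I, (Fin (p i) → ℝ) → ℝ)
    (hftilde : ∀ i w, ftilde i w = sInf {v : ℝ |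
      ∃ (a : Fin (p i + 1) → ℝ) (u : Fin (p i + 1) → (Fin (p i) → ℝ)),
        (∀ j, 0 ≤ a j) ∧ (∑ j, a j) = 1 ∧ (∀ j, u j ∈ Wset i) ∧
        (∑ j, a j • u j) = w ∧ v = ∑ j, a j * φ i (u j)})
    -- the constrained branch objective `f̂ i`
    (fhat : ∀ i : Fin I, (Fin (p i) → ℝ) → ℝ)
    (hfhat : ∀ i w, fhat i w = sInf {v : ℝ | ∃ u ∈ Wset i, h i u ≤ h i w ∧ v = φ i u})
    -- the per-branch non-convexity gaps and the worst one
    (Δ : Fin I → ℝ)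
    (hΔ : ∀ i, Δ i = sSup {v : ℝ | ∃ w ∈ Wset i, v = fhat i w - ftilde i w})
    (Δworst : ℝ) (hΔworst : Δworst = sSup (Set.range Δ))
    -- the primal and dual optimal values
    (infP : ℝ)
    (hinfP : infP = sInf {v : ℝ | ∃ w : ∀ i : Fin I, Fin (p i) → ℝ,
      (∀ i, w i ∈ Wset i) ∧ (1 / I : ℝ) * ∑ i, h i (w i) ≤ K ∧
      v = (1 / I : ℝ) * ∑ i, φ i (w i)})
    (supD : ℝ)
    (hsupD : supD = sSup {v : ℝ | ∃ lam : ℝ, 0 ≤ lam ∧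
      v = sInf {u : ℝ | ∃ w : ∀ i : Fin I, Fin (p i) → ℝ, (∀ i, w i ∈ Wset i) ∧
        u = (1 / I : ℝ) * ∑ i, φ i (w i) + (lam / I) * ∑ i, h i (w i) - lam * K}}) :
    0 ≤ infP - supD ∧ infP - supD ≤ (2 / I : ℝ) * Δworst := by
  have : Nonempty (Fin I) := ⟨⟨0, hI⟩⟩
  have hhcont' : ∀ i, ContinuousOn (h i) (Wset i) := fun i => (hhcont i).continuousOn
  have hP : infP = primalValue Wset φ h K := by
    rw [hinfP, primalValue]; simp only [IsFeasible, branchAverage, Fintype.card_fin, and_assoc]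
  have hD : supD = dualValue Wset φ h K := by
    rw [hsupD, dualValue]; simp only [dualFunction, lagrangian, Fintype.card_fin]
  obtain ⟨w, hw⟩ : ∃ w, IsFeasible Wset h K w := by
    simpa only [IsFeasible, branchAverage, Fintype.card_fin] using hfeas
  have hgap : ∀ i, Δ i = nonconvexityGap (Wset i) (φ i) (h i) := fun i => by
    rw [hΔ, funext (hfhat i), funext (hftilde i)]; rfl
  have hΔle : ∀ i, Δ i ≤ Δworst := fun i =>
    hΔworst ▸ le_csSup (finite_range Δ).bddAbove ⟨i, rfl⟩
  have hne : ∀ i, (Wset i).Nonempty := fun i => ⟨w i, hw.1 i⟩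
  have hΔworst₀ : 0 ≤ Δworst := (hgap ⟨0, hI⟩ ▸ nonconvexityGap_nonneg (hWcpt _) (hne _)
    (hφcont _)).trans (hΔle _)
  have hweak := dualValue_le_primalValue (exists_isLagrangianMin hWcpt hne hφcont hhcont') ⟨w, hw⟩
  have hstrong := primalValue_le_dualValue_add hWcpt hφcont hhcont' ⟨w, hw⟩ hΔworst₀
    fun i a ha b hb t ht => by
      obtain ⟨v, hv, hvh, hvφ⟩ := exists_le_convexCombination_add_nonconvexityGap (hWcpt i)
        (hWcvx i) (hφcont i) (hhcont' i) (hhcvx i) ha hb ht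
      exact ⟨v, hv, hvh, by linarith [hgap i ▸ hΔle i]⟩
  rw [Fintype.card_fin] at hstrong
  rw [hP, hD]
  refine ⟨by linarith, ?_⟩
  have : Δworst / I ≤ 2 / I * Δworst := by
    rw [div_mul_eq_mul_div]; gcongr; linarith
  linarith

/-- **Duality gap of multi-branch neural networks.** Consider `I` branches with compact convex
parameter sets `Wset i ⊆ ℝ^{p i}`, branch networks `f i` (continuous in the parameters),
convex continuous regularizers `h i`, and data `(x, y) ∼ μ`. Under the margin assumption the
`τ`-hinge loss is linear, so the branch objective is `φ i w = E[1 − y · f i w x / τ]`. Let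
`inf(P)` be the optimal value of the primal `min (1/I) Σ_i φ i (w i)` s.t.
`(1/I) Σ_i h i (w i) ≤ K`, and `sup(D)` the optimal value of its Lagrangian dual. With
`Δ i = sup_{w ∈ Wset i} (f̂ i w − f̃ i w)` (the gap between each branch objective and its convex
relaxation) and `Δ_worst = max_i Δ i`, the duality gap satisfies
`0 ≤ inf(P) − sup(D) ≤ (2/I) Δ_worst`. -/
theorem multibranch_duality_gap
    (I : ℕ) (hI : 0 < I) (d0 : ℕ) (p : Fin I → ℕ)
    (Wset : ∀ i : Fin I, Set (Fin (p i) → ℝ))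
    (hWcpt : ∀ i, IsCompact (Wset i)) (hWcvx : ∀ i, Convex ℝ (Wset i))
    {Ω : Type*} [MeasurableSpace Ω] (μ : Measure Ω) [IsProbabilityMeasure μ]
    (x : Ω → (Fin d0 → ℝ)) (y : Ω → ℝ) (τ : ℝ) (hτ : 0 < τ)
    (f : ∀ i : Fin I, (Fin (p i) → ℝ) → (Fin d0 → ℝ) → ℝ)
    (hfcont : ∀ i ξ, Continuous fun w => f i w ξ)
    (h : ∀ i : Fin I, (Fin (p i) → ℝ) → ℝ)
    (hhcont : ∀ i, Continuous (h i)) (hhcvx : ∀ i, ConvexOn ℝ (Wset i) (h i))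
    -- the branch objectives `φ i w = E[1 − y f_i(w; x)/τ]`
    (φ : ∀ i : Fin I, (Fin (p i) → ℝ) → ℝ)
    (hφ : ∀ i w, φ i w = ∫ ω, (1 - y ω * f i w (x ω) / τ) ∂μ)
    (hφint : ∀ i, ∀ w ∈ Wset i, Integrable (fun ω => 1 - y ω * f i w (x ω) / τ) μ)
    (hφcont : ∀ i, ContinuousOn (φ i) (Wset i))
    (K : ℝ)
    -- the primal problem is feasible
    (hfeas : ∃ w : ∀ i : Fin I, Fin (p i) → ℝ, (∀ i, w i ∈ Wset i) ∧
      (1 / I : ℝ) * ∑ i, h i (w i) ≤ K)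
    -- the convex relaxation `f̃ i` of the branch objective
    (ftilde : ∀ i : Fin I, (Fin (p i) → ℝ) → ℝ)
    (hftilde : ∀ i w, ftilde i w = sInf {v : ℝ |
      ∃ (a : Fin (p i + 1) → ℝ) (u : Fin (p i + 1) → (Fin (p i) → ℝ)),
        (∀ j, 0 ≤ a j) ∧ (∑ j, a j) = 1 ∧ (∀ j, u j ∈ Wset i) ∧
        (∑ j, a j • u j) = w ∧ v = ∑ j, a j * φ i (u j)})
    -- the constrained branch objective `f̂ i`
    (fhat : ∀ i : Fin I, (Fin (p i) → ℝ) → ℝ)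
    (hfhat : ∀ i w, fhat i w = sInf {v : ℝ | ∃ u ∈ Wset i, h i u ≤ h i w ∧ v = φ i u})
    -- the per-branch non-convexity gaps and the worst one
    (Δ : Fin I → ℝ)
    (hΔ : ∀ i, Δ i = sSup {v : ℝ | ∃ w ∈ Wset i, v = fhat i w - ftilde i w})
    (Δworst : ℝ) (hΔworst : Δworst = sSup (Set.range Δ))
    -- the primal and dual optimal values
    (infP : ℝ)
    (hinfP : infP = sInf {v : ℝ | ∃ w : ∀ i : Fin I, Fin (p i) → ℝ,
      (∀ i, w i ∈ Wset i) ∧ (1 / I : ℝ) * ∑ i, h i (w i) ≤ K ∧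
      v = (1 / I : ℝ) * ∑ i, φ i (w i)})
    (supD : ℝ)
    (hsupD : supD = sSup {v : ℝ | ∃ lam : ℝ, 0 ≤ lam ∧
      v = sInf {u : ℝ | ∃ w : ∀ i : Fin I, Fin (p i) → ℝ, (∀ i, w i ∈ Wset i) ∧
        u = (1 / I : ℝ) * ∑ i, φ i (w i) + (lam / I) * ∑ i, h i (w i) - lam * K}}) :
    0 ≤ infP - supD ∧ infP - supD ≤ (2 / I : ℝ) * Δworst :=
  multibranch_duality_gap_general I hI p Wset hWcpt hWcvx h hhcont hhcvx φ hφcont K hfeas ftilde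
    hftilde fhat hfhat Δ hΔ Δworst hΔworst infP hinfP supD hsupD
end

section
/- For the Minkowski average of I copies of a fixed compact set A ⊆ R^m, i.e., A_I = {(1/I)Σ_{j=1}^I a_j : a_j ∈ A}, the Hausdorff distance between A_I and conv(A) tends to 0 as I → ∞; in fact d_H(A_I, conv(A)) ≤ C/√I · diam(A) for an absolute constant depending only on m (and A_I ⊆ conv(A) for all I). -/
open scoped Pointwise

/-!
By Carathéodory, a point `x` of `conv A ⊆ E` is a convex combination `∑ wᵢ zᵢ` of at most
`dim E + 1` points of `A`. The numbers `n wᵢ` can be rounded to integers `kᵢ` with `∑ kᵢ = n`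
at a total cost `∑ |n wᵢ - kᵢ| ≤ 2 (dim E + 1)`, and `(1/n) ∑ kᵢ zᵢ` lies in the Minkowski
average of `n` copies of `A`. Since the errors `wᵢ - kᵢ/n` sum to zero, only the differences
`zᵢ - zⱼ` enter, so this point is within `2 (dim E + 1) / n · diam A` of `x`: the rate is
`1/n`, better than `1/√n`.
-/

open Metric Module

def minkowskiAverage {E : Type*} [AddCommMonoid E] [Module ℝ E] (A : Set E) (n : ℕ) : Set E :=
  (n : ℝ)⁻¹ • ∑ _j ∈ Finset.range n, A

section Module

variable {E : Type*} [AddCommGroup E] [Module ℝ E]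

theorem minkowskiAverage_subset_convexHull (A : Set E) {n : ℕ} (hn : 0 < n) :
    minkowskiAverage A n ⊆ convexHull ℝ A := by
  rintro _ ⟨_, hs, rfl⟩
  obtain ⟨a, ha, rfl⟩ := (Set.mem_finsetSum _ _ _).1 hs
  change (n : ℝ)⁻¹ • _ ∈ _
  rw [Finset.smul_sum]
  refine (convex_convexHull ℝ A).sum_mem (fun _ _ => by positivity) ?_
    fun j hj => subset_convexHull ℝ A (ha hj)
  simp [(Nat.cast_pos.2 hn).ne']

theorem inv_smul_sum_nsmul_mem_minkowskiAverage {ι : Type*} {s : Finset ι} {A : Set E}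
    {z : ι → E} (hz : ∀ i ∈ s, z i ∈ A) {k : ι → ℕ} {n : ℕ} (hk : ∑ i ∈ s, k i = n) :
    (n : ℝ)⁻¹ • ∑ i ∈ s, k i • z i ∈ minkowskiAverage A n := by
  refine Set.smul_mem_smul_set ?_
  rw [Finset.sum_const, Finset.card_range, ← hk, ← Finset.sum_nsmul_assoc]
  exact Set.finsetSum_mem_finsetSum _ _ _ fun i hi => Set.nsmul_mem_nsmul (hz i hi)

end Module

theorem exists_nat_sum_eq_sum_abs_sub_le {ι : Type*} [Fintype ι] {w : ι → ℝ}
    (hw0 : ∀ i, 0 ≤ w i) (hw1 : ∑ i, w i = 1) (n : ℕ) :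
    ∃ k : ι → ℕ, ∑ i, k i = n ∧ ∑ i, |n * w i - k i| ≤ 2 * Fintype.card ι := by
  classical
  obtain ⟨i₀⟩ : Nonempty ι := by
    by_contra h
    simp [not_nonempty_iff.1 h] at hw1
  set r : ι → ℝ := fun i => n * w i - ⌊n * w i⌋₊
  have hr0 : ∀ i, 0 ≤ r i := fun i => sub_nonneg.2 (Nat.floor_le (mul_nonneg n.cast_nonneg (hw0 i)))
  have hr1 : ∀ i, r i ≤ 1 := fun i => by
    have := Nat.lt_floor_add_one (n * w i); simp only [r]; linarith
  have hrsum : ∑ i, r i = n - ∑ i, ⌊n * w i⌋₊ := by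
    simp [r, Finset.sum_sub_distrib, ← Finset.mul_sum, hw1]
  -- the leftover mass `R = n - ∑ ⌊n wᵢ⌋` is put on `i₀`
  obtain ⟨R, hR⟩ : ∃ R : ℕ, ∑ i, ⌊n * w i⌋₊ + R = n := by
    refine Nat.exists_eq_add_of_le ?_ |>.imp fun _ h => h.symm
    exact_mod_cast sub_nonneg.1 (hrsum ▸ Finset.sum_nonneg fun i _ => hr0 i)
  have hRr : (R : ℝ) = ∑ i, r i := by
    have := congrArg (Nat.cast (R := ℝ)) hR
    push_cast at this hrsum
    linarith
  refine ⟨fun i => ⌊n * w i⌋₊ + if i = i₀ then R else 0, ?_, ?_⟩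
  · simp [Finset.sum_add_distrib, hR]
  calc ∑ i, |n * w i - ((⌊n * w i⌋₊ + if i = i₀ then R else 0 : ℕ) : ℝ)|
      = ∑ i, |r i - if i = i₀ then (R : ℝ) else 0| := by
        congr! 2 with i; push_cast; simp only [r]; ring
    _ ≤ ∑ i, (r i + if i = i₀ then (R : ℝ) else 0) := Finset.sum_le_sum fun i _ =>
        (abs_sub _ _).trans (by rw [abs_of_nonneg (hr0 i), abs_of_nonneg (by positivity)])
    _ = 2 * ∑ i, r i := by rw [Finset.sum_add_distrib, Finset.sum_ite_eq']; simp [hRr]; ring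
    _ ≤ 2 * Fintype.card ι := by
        gcongr
        simpa using Finset.sum_le_sum fun i (_ : i ∈ Finset.univ) => hr1 i

theorem norm_sum_smul_le_of_sum_eq_zero {E : Type*} [SeminormedAddCommGroup E] [NormedSpace ℝ E]
    {ι : Type*} {s : Finset ι} {A : Set E} (hA : Bornology.IsBounded A) {z : ι → E}
    (hz : ∀ i ∈ s, z i ∈ A) {c : ι → ℝ} (hc : ∑ i ∈ s, c i = 0) :
    ‖∑ i ∈ s, c i • z i‖ ≤ (∑ i ∈ s, |c i|) * diam A := by
  rcases s.eq_empty_or_nonempty with rfl | ⟨i₀, hi₀⟩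
  · simp
  have hshift : ∑ i ∈ s, c i • z i = ∑ i ∈ s, c i • (z i - z i₀) := by
    simp only [smul_sub, Finset.sum_sub_distrib, ← Finset.sum_smul, hc, zero_smul, sub_zero]
  calc ‖∑ i ∈ s, c i • z i‖ ≤ ∑ i ∈ s, ‖c i • (z i - z i₀)‖ := hshift ▸ norm_sum_le _ _
    _ ≤ ∑ i ∈ s, |c i| * diam A := Finset.sum_le_sum fun i hi => by
      rw [norm_smul, Real.norm_eq_abs, ← dist_eq_norm]
      exact mul_le_mul_of_nonneg_left (dist_le_diam_of_mem hA (hz i hi) (hz i₀ hi₀))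
        (abs_nonneg _)
    _ = (∑ i ∈ s, |c i|) * diam A := (Finset.sum_mul ..).symm

section FiniteDimensional

variable {E : Type*} [NormedAddCommGroup E] [NormedSpace ℝ E] [FiniteDimensional ℝ E]
  {A : Set E} {n : ℕ}

theorem exists_mem_minkowskiAverage_dist_le (hA : Bornology.IsBounded A) {x : E}
    (hx : x ∈ convexHull ℝ A) (hn : 0 < n) :
    ∃ y ∈ minkowskiAverage A n, dist x y ≤ 2 * (finrank ℝ E + 1) / n * diam A := by
  obtain ⟨ι, _, z, w, hzA, hz, hw0, hw1, rfl⟩ := eq_pos_convex_span_of_mem_convexHull hx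
  have hcard : (Fintype.card ι : ℝ) ≤ finrank ℝ E + 1 := by
    exact_mod_cast hz.card_le_finrank_succ.trans (by gcongr; exact Submodule.finrank_le _)
  obtain ⟨k, hk, hdev⟩ := exists_nat_sum_eq_sum_abs_sub_le (fun i => (hw0 i).le) hw1 n
  refine ⟨_, inv_smul_sum_nsmul_mem_minkowskiAverage (fun i _ => hzA ⟨i, rfl⟩) hk, ?_⟩
  have hn' : (0 : ℝ) < n := Nat.cast_pos.2 hn
  have hsum : ∑ i, ((n : ℝ) * w i - k i) = 0 := by
    simp [Finset.sum_sub_distrib, ← Finset.mul_sum, hw1, ← Nat.cast_sum, hk]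
  have herr : (n : ℝ) • ∑ i, w i • z i - ∑ i, k i • z i = ∑ i, ((n : ℝ) * w i - k i) • z i := by
    simp only [Finset.smul_sum, smul_smul, sub_smul, Finset.sum_sub_distrib, Nat.cast_smul_eq_nsmul]
  calc dist (∑ i, w i • z i) ((n : ℝ)⁻¹ • ∑ i, k i • z i)
      = (n : ℝ)⁻¹ * ‖(n : ℝ) • ∑ i, w i • z i - ∑ i, k i • z i‖ := by
        rw [dist_eq_norm, ← norm_smul_of_nonneg (inv_nonneg.2 hn'.le), smul_sub,
          inv_smul_smul₀ hn'.ne']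
    _ ≤ (n : ℝ)⁻¹ * ((2 * (finrank ℝ E + 1)) * diam A) := by
        rw [herr]
        gcongr
        calc _ ≤ (∑ i, |(n : ℝ) * w i - k i|) * diam A :=
              norm_sum_smul_le_of_sum_eq_zero hA (fun i _ => hzA ⟨i, rfl⟩) hsum
          _ ≤ (2 * (finrank ℝ E + 1)) * diam A := by
            gcongr
            linarith
    _ = 2 * (finrank ℝ E + 1) / n * diam A := by ring

theorem hausdorffDist_minkowskiAverage_convexHull_le (hA : Bornology.IsBounded A) (hn : 0 < n) :
    hausdorffDist (minkowskiAverage A n) (convexHull ℝ A) ≤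
      2 * (finrank ℝ E + 1) / n * diam A := by
  have hr : 0 ≤ 2 * (finrank ℝ E + 1) / n * diam A := by positivity
  refine hausdorffDist_le_of_mem_dist hr
    (fun x hx => ⟨x, minkowskiAverage_subset_convexHull A hn hx, (dist_self x).trans_le hr⟩)
    fun x hx => exists_mem_minkowskiAverage_dist_le hA hx hn

end FiniteDimensional

/-- **Convexification of Minkowski averages (Shapley–Folkman–Starr).** For a nonempty compact
set `A ⊆ ℝ^m`, the Minkowski average `A_I = {(1/I) Σ_{j=1}^I a_j : a_j ∈ A}` is contained in
`conv A`, its Hausdorff distance to `conv A` is at most `C/√I · diam A` for a constant `C`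
depending only on `m`, and in particular it tends to `0` as `I → ∞`. -/
theorem minkowski_average_convexifies (m : ℕ) :
    ∃ C : ℝ, 0 < C ∧
      ∀ A : Set (EuclideanSpace ℝ (Fin m)), IsCompact A → A.Nonempty →
        (∀ I : ℕ, 0 < I →
          ((I : ℝ)⁻¹ • ∑ _j ∈ Finset.range I, A) ⊆ convexHull ℝ A) ∧
        (∀ I : ℕ, 0 < I →
          Metric.hausdorffDist ((I : ℝ)⁻¹ • ∑ _j ∈ Finset.range I, A) (convexHull ℝ A) ≤
            C / Real.sqrt I * Metric.diam A) ∧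
        Filter.Tendsto
          (fun I : ℕ =>
            Metric.hausdorffDist ((I : ℝ)⁻¹ • ∑ _j ∈ Finset.range I, A) (convexHull ℝ A))
          Filter.atTop (nhds 0) := by
  refine ⟨2 * (m + 1), by positivity, fun A hA _ => ?_⟩
  have hdist : ∀ I : ℕ, 0 < I → hausdorffDist (minkowskiAverage A I) (convexHull ℝ A) ≤
      2 * (m + 1) / I * diam A := fun I hI => by
    simpa using hausdorffDist_minkowskiAverage_convexHull_le hA.isBounded hI
  refine ⟨fun I => minkowskiAverage_subset_convexHull A, fun I hI => ?_, ?_⟩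
  · have hsqrt : Real.sqrt I ≤ I := Real.sqrt_le_self_iff.2 (.inr (by exact_mod_cast hI))
    exact (hdist I hI).trans (by gcongr)
  · refine squeeze_zero' (.of_forall fun I => hausdorffDist_nonneg) ?_
      (tendsto_const_div_atTop_nhds_zero_nat (2 * (m + 1) * diam A))
    filter_upwards [Filter.eventually_gt_atTop 0] with I hI
    exact (hdist I hI).trans_eq (div_mul_eq_mul_div ..)
end
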